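/- arXiv:2004.01979 — 8 statements merged into one kernel-verified Lean document; each statement's English description precedes it below -/
import Mathlib

section
/- Every free ultrafilter on ω that is a Q-point is a T-point. -/
def IsEntourage (E : Set (ℕ × ℕ)) : Prop := SetRel.id ⊆ E

def entComp (E F : Set (ℕ × ℕ)) : Set (ℕ × ℕ) :=
  {p | ∃ y, (p.1, y) ∈ E ∧ (y, p.2) ∈ F}

def entInv (E : Set (ℕ × ℕ)) : Set (ℕ × ℕ) := {p | (p.2, p.1) ∈ E}

def entBall (E : Set (ℕ × ℕ)) (x : ℕ) : Set ℕ := {y | (x, y) ∈ E}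

def IsCellularEnt (E : Set (ℕ × ℕ)) : Prop := entInv E = E ∧ entComp E E = E

def IsLocallyFiniteEnt (E : Set (ℕ × ℕ)) : Prop :=
  ∀ x : ℕ, (entBall E x ∪ entBall (entInv E) x).Finite

def IsFinitaryEnt (E : Set (ℕ × ℕ)) : Prop :=
  ∃ n : ℕ, ∀ x : ℕ, (entBall E x ∪ entBall (entInv E) x).Finite ∧
    (entBall E x ∪ entBall (entInv E) x).ncard ≤ n

/-- A free ultrafilter contains no finite set. -/
def IsFreeUF (𝒰 : Ultrafilter ℕ) : Prop := ∀ A : Set ℕ, A.Finite → A ∉ 𝒰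

/-- `𝒰` is a Q-point. -/
def IsQPoint (𝒰 : Ultrafilter ℕ) : Prop :=
  ∀ E : Set (ℕ × ℕ), IsEntourage E → IsLocallyFiniteEnt E → IsCellularEnt E →
    ∃ U ∈ 𝒰, ∀ x : ℕ, (U ∩ entBall E x).Subsingleton

/-- `𝒰` is a T-point. -/
def IsTPoint (𝒰 : Ultrafilter ℕ) : Prop :=
  ∀ E : ℕ → Set (ℕ × ℕ), (∀ n, IsEntourage (E n) ∧ IsFinitaryEnt (E n)) →
    Monotone E →
    ∃ U ∈ 𝒰, ∀ n : ℕ, {x ∈ U | U ∩ entBall (E n) x ≠ {x}}.Finite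

/-!
Cut `ℕ` into consecutive finite blocks growing so fast that every `E n`-ball (in either
direction) around a point of block `k > n` stays inside blocks `k - 1, k, k + 1`.
Grouping the blocks in pairs `{2i, 2i+1}`, and again in pairs `{2i-1, 2i}`, gives two
equivalence relations with finite classes; a Q-point contains a selector `U` for both, so `U`
meets any two adjacent blocks in at most one point. Hence for `x ∈ U` beyond block `n`,
`U ∩ E n x = {x}`.
-/

def kerEnt (f : ℕ → ℕ) : Set (ℕ × ℕ) := {p | f p.1 = f p.2}

theorem isEntourage_kerEnt (f : ℕ → ℕ) : IsEntourage (kerEnt f) := by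
  rintro ⟨x, y⟩ (rfl : x = y)
  rfl

theorem isCellularEnt_kerEnt (f : ℕ → ℕ) : IsCellularEnt (kerEnt f) := by
  refine ⟨Set.ext fun _ => eq_comm, Set.ext fun p => ⟨?_, fun h => ⟨p.1, rfl, h⟩⟩⟩
  rintro ⟨y, h₁, h₂⟩
  exact (h₁ : f p.1 = f y).trans h₂

theorem isLocallyFiniteEnt_kerEnt {f : ℕ → ℕ} (hf : ∀ a, (f ⁻¹' {a}).Finite) :
    IsLocallyFiniteEnt (kerEnt f) := by
  intro x
  refine (hf (f x)).subset ?_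
  rintro y (h | h)
  exacts [(h : f x = f y).symm, (h : f y = f x)]

theorem IsQPoint.exists_injOn {𝒰 : Ultrafilter ℕ} (hQ : IsQPoint 𝒰) {f : ℕ → ℕ}
    (hf : ∀ a, (f ⁻¹' {a}).Finite) : ∃ U ∈ 𝒰, Set.InjOn f U := by
  obtain ⟨U, hU, hsel⟩ := hQ (kerEnt f) (isEntourage_kerEnt f) (isLocallyFiniteEnt_kerEnt hf)
    (isCellularEnt_kerEnt f)
  exact ⟨U, hU, fun x hx y hy hxy => hsel x ⟨hx, rfl⟩ ⟨hy, hxy⟩⟩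

theorem IsQPoint.exists_mem_eq_of_adjacent {𝒰 : Ultrafilter ℕ} (hQ : IsQPoint 𝒰)
    {c : ℕ → ℕ} (hc : ∀ k, {x | c x ≤ k}.Finite) :
    ∃ U ∈ 𝒰, ∀ x ∈ U, ∀ y ∈ U, c y ≤ c x + 1 → c x ≤ c y + 1 → x = y := by
  obtain ⟨U₁, hU₁, hinj₁⟩ := hQ.exists_injOn (f := fun x => c x / 2)
    fun a => (hc (2 * a + 1)).subset fun x (hx : c x / 2 = a) => show c x ≤ 2 * a + 1 by omega
  obtain ⟨U₂, hU₂, hinj₂⟩ := hQ.exists_injOn (f := fun x => (c x + 1) / 2)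
    fun a => (hc (2 * a)).subset fun x (hx : (c x + 1) / 2 = a) => show c x ≤ 2 * a by omega
  refine ⟨U₁ ∩ U₂, Filter.inter_mem hU₁ hU₂, fun x hx y hy hyx hxy => ?_⟩
  rcases (by omega : c x / 2 = c y / 2 ∨ (c x + 1) / 2 = (c y + 1) / 2) with h | h
  exacts [hinj₁ hx.1 hy.1 h, hinj₂ hx.2 hy.2 h]

theorem exists_strictMono_forall_subset_Iic (S : ℕ → ℕ → Set ℕ)
    (hS : ∀ n x, (S n x).Finite) :
    ∃ m : ℕ → ℕ, StrictMono m ∧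
      ∀ k x, x ≤ m k → ∀ n ≤ k + 1, S n x ⊆ Set.Iic (m (k + 1)) := by
  have hbound : ∀ k a, ∃ b, a < b ∧ ∀ x ≤ a, ∀ n ≤ k, S n x ⊆ Set.Iic b := by
    intro k a
    obtain ⟨b, hb⟩ := ((Set.finite_Iic a).biUnion fun x _ =>
      (Set.finite_Iic k).biUnion fun n _ => hS n x).bddAbove
    refine ⟨max (a + 1) b, by omega, fun x hx n hn y hy => ?_⟩
    exact (hb (Set.mem_biUnion (Set.mem_Iic.2 hx) (Set.mem_biUnion (Set.mem_Iic.2 hn) hy))).trans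
      (le_max_right _ _)
  choose B hB_lt hB using hbound
  let m : ℕ → ℕ := fun k => Nat.rec 0 (fun k mk => B (k + 1) mk) k
  exact ⟨m, strictMono_nat_of_lt_succ fun k => hB_lt (k + 1) (m k),
    fun k x hx n hn => hB (k + 1) (m k) x hx n hn⟩

theorem exists_block_index (S : ℕ → ℕ → Set ℕ) (hS : ∀ n x, (S n x).Finite) :
    ∃ c : ℕ → ℕ, (∀ k, {x | c x ≤ k}.Finite) ∧
      ∀ n k x y, c x ≤ k → n ≤ k + 1 → y ∈ S n x → c y ≤ k + 1 := by
  classical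
  obtain ⟨m, hm_mono, hm⟩ := exists_strictMono_forall_subset_Iic S hS
  have hex : ∀ x, ∃ k, x ≤ m k := fun x => ⟨x, hm_mono.id_le x⟩
  have hc_le : ∀ x k, Nat.find (hex x) ≤ k ↔ x ≤ m k := fun x k =>
    ⟨fun h => (Nat.find_spec (hex x)).trans (hm_mono.monotone h), Nat.find_min' (hex x)⟩
  refine ⟨fun x => Nat.find (hex x), fun k => ?_, fun n k x y hx hn hy => ?_⟩
  · exact (Set.finite_Iic (m k)).subset fun x hx => (hc_le x k).1 hx
  · exact (hc_le y _).2 (hm k x ((hc_le x k).1 hx) n hn hy)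

theorem adjacent_of_mem_of_lt {S : ℕ → ℕ → Set ℕ}
    (hS : ∀ n x y, y ∈ S n x → x ∈ S n y) {c : ℕ → ℕ}
    (hc : ∀ n k x y, c x ≤ k → n ≤ k + 1 → y ∈ S n x → c y ≤ k + 1)
    {n x y : ℕ} (hn : n < c x) (hy : y ∈ S n x) : c y ≤ c x + 1 ∧ c x ≤ c y + 1 := by
  refine ⟨hc n (c x) x y le_rfl (by omega) hy, ?_⟩
  by_contra! h
  -- `y` lies in block `c x - 2` or earlier, so `x ∈ S n y` forces `x` into block `c x - 1`.
  have := hc n (c x - 2) y x (by omega) (by omega) (hS n x y hy)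
  omega

theorem qPoint_isTPoint_general (𝒰 : Ultrafilter ℕ) (hQ : IsQPoint 𝒰) : IsTPoint 𝒰 := by
  intro E hE _
  let S n x := entBall (E n) x ∪ entBall (entInv (E n)) x
  have hS_fin : ∀ n x, (S n x).Finite := fun n x => ((hE n).2.choose_spec x).1
  have hS_symm : ∀ n x y, y ∈ S n x → x ∈ S n y := fun _ _ _ => Or.symm
  obtain ⟨c, hc_fin, hc⟩ := exists_block_index S hS_fin
  obtain ⟨U, hU, hsel⟩ := hQ.exists_mem_eq_of_adjacent hc_fin
  refine ⟨U, hU, fun n => (hc_fin n).subset ?_⟩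
  rintro x ⟨hxU, hx⟩
  by_contra! hn
  refine hx (Set.eq_singleton_iff_unique_mem.2 ⟨⟨hxU, (hE n).1 rfl⟩, ?_⟩)
  rintro y ⟨hyU, hy⟩
  obtain ⟨hyx, hxy⟩ := adjacent_of_mem_of_lt hS_symm hc (not_le.1 hn) (Or.inl hy)
  exact (hsel x hxU y hyU hyx hxy).symm

theorem qPoint_isTPoint (𝒰 : Ultrafilter ℕ) (hfree : IsFreeUF 𝒰)
    (hQ : IsQPoint 𝒰) : IsTPoint 𝒰 :=
  qPoint_isTPoint_general 𝒰 hQ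
end

section
/- Every weak P-point ultrafilter U on ω is dynamically discrete: for any action of a countable group G on ω by bijections, the orbit {gU : g ∈ G} of U under the induced action on βω is a discrete subspace of βω. -/
def IsWeakPPoint (𝒰 : Ultrafilter ℕ) : Prop :=
  ∀ 𝒱 : ℕ → Ultrafilter ℕ, (∀ n, IsFreeUF (𝒱 n)) → (∀ n, 𝒱 n ≠ 𝒰) →
    ∃ U ∈ 𝒰, ∀ n, U ∉ 𝒱 n

/-- The orbit of `𝒰` in `βω` under the action of a group `G ⊆ S_ω`
of permutations of `ω`. -/
def orbitUF (G : Subgroup (Equiv.Perm ℕ)) (𝒰 : Ultrafilter ℕ) :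
    Set (Ultrafilter ℕ) :=
  {q | ∃ g ∈ G, q = Ultrafilter.map (⇑g) 𝒰}

/-- `𝒰` is dynamically discrete: for every countable group of permutations
of `ω` the orbit of `𝒰` is a discrete subspace of `βω` (with its Stone
topology, present on `Ultrafilter ℕ` in Mathlib). -/
def IsDynamicallyDiscrete (𝒰 : Ultrafilter ℕ) : Prop :=
  ∀ G : Subgroup (Equiv.Perm ℕ), Countable G →
    DiscreteTopology (orbitUF G 𝒰)

open Set Ultrafilter Equiv

lemma IsFreeUF.map_of_injective {𝒰 : Ultrafilter ℕ} (h : IsFreeUF 𝒰) {f : ℕ → ℕ}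
    (hf : f.Injective) : IsFreeUF (map f 𝒰) :=
  fun _ hA hmem => h _ (hA.preimage hf.injOn) (mem_map.mp hmem)

lemma IsWeakPPoint.exists_mem_isolating {𝒰 : Ultrafilter ℕ} (hW : IsWeakPPoint 𝒰)
    {S : Set (Ultrafilter ℕ)} (hS : S.Countable) (hfree : ∀ 𝒱 ∈ S, IsFreeUF 𝒱) :
    ∃ A ∈ 𝒰, ∀ 𝒱 ∈ S, A ∈ 𝒱 → 𝒱 = 𝒰 := by
  rcases (S \ {𝒰}).eq_empty_or_nonempty with hempty | hne
  · exact ⟨univ, Filter.univ_mem, fun 𝒱 h𝒱 _ => by_contra fun h𝒱𝒰 => hempty.subset ⟨h𝒱, h𝒱𝒰⟩⟩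
  · obtain ⟨𝒱, h𝒱⟩ := (hS.mono sdiff_subset).exists_eq_range hne
    have h𝒱S : ∀ n, 𝒱 n ∈ S \ {𝒰} := fun n => h𝒱 ▸ mem_range_self n
    obtain ⟨A, hA, hnot⟩ := hW 𝒱 (fun n => hfree _ (h𝒱S n).1) (fun n => (h𝒱S n).2)
    refine ⟨A, hA, fun 𝒲 h𝒲 hA𝒲 => by_contra fun h𝒲𝒰 => ?_⟩
    obtain ⟨n, rfl⟩ : 𝒲 ∈ range 𝒱 := h𝒱 ▸ ⟨h𝒲, h𝒲𝒰⟩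
    exact hnot n hA𝒲

lemma map_perm_mul (g k : Perm ℕ) (𝒰 : Ultrafilter ℕ) :
    map (⇑(g * k)) 𝒰 = map g (map k 𝒰) :=
  (map_map 𝒰 k g).symm

lemma image_mem_map_perm_iff (g k : Perm ℕ) (𝒰 : Ultrafilter ℕ) (A : Set ℕ) :
    g '' A ∈ map k 𝒰 ↔ A ∈ map (⇑(g⁻¹ * k)) 𝒰 := by
  rw [map_perm_mul, mem_map (m := ⇑g⁻¹), image_eq_preimage_symm, Perm.inv_def]

lemma countable_orbitUF (G : Subgroup (Perm ℕ)) [Countable G] (𝒰 : Ultrafilter ℕ) :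
    (orbitUF G 𝒰).Countable :=
  (countable_range fun g : G => map (⇑(g : Perm ℕ)) 𝒰).mono <| by
    rintro _ ⟨g, hg, rfl⟩
    exact ⟨⟨g, hg⟩, rfl⟩

lemma IsFreeUF.of_mem_orbitUF {G : Subgroup (Perm ℕ)} {𝒰 𝒱 : Ultrafilter ℕ} (hfree : IsFreeUF 𝒰)
    (h𝒱 : 𝒱 ∈ orbitUF G 𝒰) : IsFreeUF 𝒱 := by
  obtain ⟨g, -, rfl⟩ := h𝒱
  exact hfree.map_of_injective g.injective

lemma discreteTopology_orbitUF_of_isolating {G : Subgroup (Perm ℕ)} {𝒰 : Ultrafilter ℕ}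
    {A : Set ℕ} (hA : A ∈ 𝒰) (hiso : ∀ 𝒱 ∈ orbitUF G 𝒰, A ∈ 𝒱 → 𝒱 = 𝒰) :
    DiscreteTopology (orbitUF G 𝒰) := by
  rw [discreteTopology_subtype_iff']
  rintro _ ⟨g, hg, rfl⟩
  refine ⟨{𝒱 | g '' A ∈ 𝒱}, ultrafilter_isOpen_basic _, ?_⟩
  ext 𝒱
  constructor
  · rintro ⟨hg𝒱, k, hk, rfl⟩
    rw [mem_ofPred_eq, image_mem_map_perm_iff] at hg𝒱
    have hk𝒰 := hiso _ ⟨g⁻¹ * k, mul_mem (inv_mem hg) hk, rfl⟩ hg𝒱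
    calc map k 𝒰 = map (⇑(g * (g⁻¹ * k))) 𝒰 := by rw [mul_inv_cancel_left]
      _ = map g 𝒰 := by rw [map_perm_mul, hk𝒰]
  · rintro rfl
    refine ⟨(image_mem_map_perm_iff g g 𝒰 A).2 ?_, g, hg, rfl⟩
    rwa [inv_mul_cancel, Perm.coe_one, map_id]

theorem weakPPoint_isDynamicallyDiscrete (𝒰 : Ultrafilter ℕ)
    (hfree : IsFreeUF 𝒰) (hW : IsWeakPPoint 𝒰) :
    IsDynamicallyDiscrete 𝒰 := by
  intro G _
  obtain ⟨A, hA, hiso⟩ :=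
    hW.exists_mem_isolating (countable_orbitUF G 𝒰) fun _ => hfree.of_mem_orbitUF
  exact discreteTopology_orbitUF_of_isolating hA hiso
end

section
/- If (U_n)_{n∈ω} is a sequence of pairwise non-isomorphic weak P-point ultrafilters on ω, then every ultrafilter W in the closure of {U_n : n ∈ ω} in βω \ ω is dynamically discrete. -/
/-- Ultrafilters `𝒰, 𝒱` are isomorphic if some bijection of `ω` maps one
onto the other. -/
def IsomorphicUF (𝒰 𝒱 : Ultrafilter ℕ) : Prop :=
  ∃ f : Equiv.Perm ℕ, Ultrafilter.map (⇑f) 𝒱 = 𝒰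

/-!
Write `𝒲 = lim_𝒱 𝒰ₙ` for an ultrafilter `𝒱` on the index set. If a permutation `g` moves `𝒲`,
then it moves `𝒰ₙ` for `𝒱`-almost every `n`, and each such moved copy `g 𝒰ₙ` differs from every
`𝒰ₘ` because the `𝒰ₙ` are pairwise non-isomorphic. For countable `G` there are only countably
many moved copies, all weak P-points, so a diagonal construction gives one set `A` lying in every
`𝒰ₘ` but in no moved copy. Then `A ∈ 𝒲` and `A ∉ g 𝒲` whenever `g 𝒲 ≠ 𝒲`, so the translates
`{u | g A ∈ u}` isolate the points of the orbit.
-/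

open Filter Set Topology

namespace Ultrafilter

variable {α β γ : Type*}

theorem mem_bind {f : Ultrafilter α} {m : α → Ultrafilter β} {s : Set β} :
    s ∈ f.bind m ↔ {a | s ∈ m a} ∈ f :=
  Iff.rfl

theorem map_bind (f : Ultrafilter α) (m : α → Ultrafilter β) (g : β → γ) :
    (f.bind m).map g = f.bind fun a => (m a).map g :=
  coe_injective (Filter.map_bind g (f : Filter α) _)

theorem bind_congr {f : Ultrafilter α} {m m' : α → Ultrafilter β} (h : ∀ᶠ a in f, m a = m' a) :
    f.bind m = f.bind m' := by
  ext s
  simp only [mem_bind]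
  exact congr_sets (h.mono fun a ha => by simp only [mem_ofPred_eq, ha])

theorem map_perm_mul (u : Ultrafilter α) (g h : Equiv.Perm α) :
    u.map ⇑(g * h) = (u.map h).map g := by
  rw [Equiv.Perm.coe_mul, map_map]

theorem exists_bind_eq_of_mem_closure_range {ι : Type*} {u : ι → Ultrafilter α}
    {w : Ultrafilter α} (hw : w ∈ closure (range u)) : ∃ f : Ultrafilter ι, f.bind u = w := by
  have : (Filter.comap u (𝓝 w)).NeBot := comap_neBot_iff.mpr fun t ht => by
    obtain ⟨_, hx, a, rfl⟩ := mem_closure_iff_nhds.mp hw t ht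
    exact ⟨a, hx⟩
  refine ⟨Ultrafilter.of (Filter.comap u (𝓝 w)), eq_of_le fun s hs => ?_⟩
  exact Ultrafilter.of_le _ (preimage_mem_comap ((ultrafilter_isOpen_basic s).mem_nhds hs))

end Ultrafilter

theorem IsFreeUF.map {u : Ultrafilter ℕ} (hu : IsFreeUF u) {f : ℕ → ℕ}
    (hf : Function.Injective f) : IsFreeUF (u.map f) :=
  fun _ hA => hu _ (hA.preimage hf.injOn)

theorem IsWeakPPoint.map {u : Ultrafilter ℕ} (hu : IsWeakPPoint u) (f : Equiv.Perm ℕ) :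
    IsWeakPPoint (u.map f) := by
  intro v hv_free hv_ne
  have hmap_inv : ∀ n, (v n).map ⇑f⁻¹ ≠ u := fun n h => hv_ne n <| by
    rw [← h, ← Ultrafilter.map_perm_mul, mul_inv_cancel, Equiv.Perm.coe_one, Ultrafilter.map_id]
  obtain ⟨U, hU, hU_avoids⟩ :=
    hu (fun n => (v n).map ⇑f⁻¹) (fun n => (hv_free n).map f⁻¹.injective) hmap_inv
  refine ⟨f '' U, by simpa [Ultrafilter.mem_map] using hU, fun n hn => hU_avoids n ?_⟩
  rwa [Ultrafilter.mem_map, Equiv.Perm.inv_def, ← Equiv.image_eq_preimage_symm]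

theorem exists_separating_set_of_isWeakPPoint_nat (u v : ℕ → Ultrafilter ℕ)
    (hu_free : ∀ m, IsFreeUF (u m)) (hv_free : ∀ k, IsFreeUF (v k))
    (hu : ∀ m, IsWeakPPoint (u m)) (hv : ∀ k, IsWeakPPoint (v k)) (hne : ∀ m k, v k ≠ u m) :
    ∃ A : Set ℕ, (∀ m, A ∈ u m) ∧ ∀ k, A ∉ v k := by
  choose B hBu hBv using fun m => hu m v hv_free fun k => hne m k
  choose D hDv hDu using fun k => hv k u hu_free fun m => (hne m k).symm
  -- `D k` is cut out of every piece `B m` with `k ≤ m`, so `A ∩ D k ⊆ ⋃ m < k, B m ∉ v k`.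
  refine ⟨⋃ m, B m \ ⋃ k ∈ Iic m, D k, fun m => ?_, fun k hk => ?_⟩
  · have hD : (⋃ k ∈ Iic m, D k) ∉ u m := by
      rw [Ultrafilter.finite_biUnion_mem_iff (finite_Iic m)]
      exact fun ⟨k, _, hk⟩ => hDu k m hk
    exact mem_of_superset (sdiff_mem (hBu m) (Ultrafilter.compl_mem_iff_notMem.mpr hD))
      (subset_iUnion (fun m => B m \ ⋃ k ∈ Iic m, D k) m)
  · have hsub : (⋃ m, B m \ ⋃ k ∈ Iic m, D k) ∩ D k ⊆ ⋃ m ∈ Iio k, B m := by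
      rintro x ⟨hx, hxD⟩
      obtain ⟨m, hxB, hxD'⟩ := mem_iUnion.mp hx
      refine mem_biUnion (mem_Iio.mpr (not_le.mp fun hkm => hxD' ?_)) hxB
      exact mem_biUnion (mem_Iic.mpr hkm) hxD
    have hB := mem_of_superset (inter_mem hk (hDv k)) hsub
    obtain ⟨m, -, hm⟩ := (Ultrafilter.finite_biUnion_mem_iff (finite_Iio k)).mp hB
    exact hBv m k hm

theorem exists_separating_set_of_isWeakPPoint {ι : Type*} [Countable ι]
    (u : ℕ → Ultrafilter ℕ) (v : ι → Ultrafilter ℕ)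
    (hu_free : ∀ m, IsFreeUF (u m)) (hv_free : ∀ i, IsFreeUF (v i))
    (hu : ∀ m, IsWeakPPoint (u m)) (hv : ∀ i, IsWeakPPoint (v i)) (hne : ∀ m i, v i ≠ u m) :
    ∃ A : Set ℕ, (∀ m, A ∈ u m) ∧ ∀ i, A ∉ v i := by
  cases isEmpty_or_nonempty ι
  · exact ⟨univ, fun _ => univ_mem, isEmptyElim⟩
  obtain ⟨e, he⟩ := exists_surjective_nat ι
  obtain ⟨A, hAu, hAv⟩ := exists_separating_set_of_isWeakPPoint_nat u (v ∘ e) hu_free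
    (fun k => hv_free (e k)) hu (fun k => hv (e k)) fun m k => hne m (e k)
  refine ⟨A, hAu, fun i => ?_⟩
  obtain ⟨k, rfl⟩ := he i
  exact hAv k

theorem discreteTopology_orbitUF_of_separating {G : Subgroup (Equiv.Perm ℕ)}
    {w : Ultrafilter ℕ} {A : Set ℕ} (hA : A ∈ w)
    (hsep : ∀ g ∈ G, w.map ⇑g ≠ w → A ∉ w.map ⇑g) : DiscreteTopology (orbitUF G w) := by
  refine discreteTopology_iff_isOpen_singleton.mpr ?_
  rintro ⟨_, g, hg, rfl⟩
  refine isOpen_induced_iff.mpr ⟨{u | ⇑g '' A ∈ u}, ultrafilter_isOpen_basic _, ?_⟩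
  ext ⟨_, g', hg', rfl⟩
  simp only [mem_preimage, mem_ofPred_eq, mem_singleton_iff, Subtype.ext_iff]
  constructor
  · intro hgA
    by_contra hne
    refine hsep (g⁻¹ * g') (mul_mem (inv_mem hg) hg') (fun h => hne ?_) ?_
    · rw [← congrArg (Ultrafilter.map ⇑g) h, ← Ultrafilter.map_perm_mul, mul_inv_cancel_left]
    · rwa [Ultrafilter.mem_map, Equiv.Perm.coe_mul, preimage_comp, Equiv.Perm.inv_def,
        ← Equiv.image_eq_preimage_symm]
  · rintro h
    rw [h, Ultrafilter.mem_map, Equiv.preimage_image]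
    exact hA

theorem closure_of_nonisomorphic_weakPPoints_dynamicallyDiscrete_general
    (𝒰 : ℕ → Ultrafilter ℕ)
    (hfree : ∀ n, IsFreeUF (𝒰 n))
    (hwp : ∀ n, IsWeakPPoint (𝒰 n))
    (hnoniso : ∀ m n, m ≠ n → ¬ IsomorphicUF (𝒰 m) (𝒰 n))
    (𝒲 : Ultrafilter ℕ)
    (hW : 𝒲 ∈ closure (Set.range 𝒰)) :
    IsDynamicallyDiscrete 𝒲 := by
  intro G _
  obtain ⟨𝒱, rfl⟩ := Ultrafilter.exists_bind_eq_of_mem_closure_range hW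
  let moved := {p : G × ℕ // (𝒰 p.2).map ⇑p.1.1 ≠ 𝒰 p.2}
  let copy (p : moved) : Ultrafilter ℕ := (𝒰 p.1.2).map ⇑(p.1.1 : Equiv.Perm ℕ)
  have hne : ∀ m p, copy p ≠ 𝒰 m := by
    rintro m ⟨⟨g, n⟩, hgn⟩ h
    rcases eq_or_ne m n with rfl | hmn
    · exact hgn h
    · exact hnoniso m n hmn ⟨g, h⟩
  obtain ⟨A, hA𝒰, hA_moved⟩ := exists_separating_set_of_isWeakPPoint 𝒰 copy hfree
    (fun p => (hfree _).map p.1.1.1.injective) hwp (fun p => (hwp _).map p.1.1.1) hne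
  refine discreteTopology_orbitUF_of_separating (A := A) ?_ fun g hg hg_moves hgA => ?_
  · simp only [Ultrafilter.mem_bind, hA𝒰, ofPred_true]
    exact univ_mem
  rw [Ultrafilter.map_bind] at hg_moves hgA
  have hM : ∀ᶠ n in 𝒱, (𝒰 n).map ⇑g ≠ 𝒰 n := by
    by_contra hM
    exact hg_moves (Ultrafilter.bind_congr (by simpa using hM))
  have hA_ev : ∀ᶠ n in 𝒱, A ∈ (𝒰 n).map ⇑g := Ultrafilter.mem_bind.mp hgA
  obtain ⟨n, hAn, hn⟩ := (hA_ev.and hM).exists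
  exact hA_moved ⟨(⟨g, hg⟩, n), hn⟩ hAn

theorem closure_of_nonisomorphic_weakPPoints_dynamicallyDiscrete
    (𝒰 : ℕ → Ultrafilter ℕ)
    (hfree : ∀ n, IsFreeUF (𝒰 n))
    (hwp : ∀ n, IsWeakPPoint (𝒰 n))
    (hnoniso : ∀ m n, m ≠ n → ¬ IsomorphicUF (𝒰 m) (𝒰 n))
    (𝒲 : Ultrafilter ℕ) (hfreeW : IsFreeUF 𝒲)
    (hW : 𝒲 ∈ closure (Set.range 𝒰)) :
    IsDynamicallyDiscrete 𝒲 :=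
  closure_of_nonisomorphic_weakPPoints_dynamicallyDiscrete_general 𝒰 hfree hwp hnoniso 𝒲 hW
end

section
/- Assume 𝔱 = 𝔠. For every subgroup H of the homeomorphism group of ω* = βω \ ω, the dynamical system (ω*, H) is topologically transitive if and only if it has a dense orbit. -/
open Cardinal

/-- The tower number `𝔱`: the least cardinality of a family of infinite
subsets of `ω`, linearly (pre)ordered by almost inclusion `⊆*`, having no
infinite pseudo-intersection. -/
noncomputable def towerNumber : Cardinal :=
  sInf { c : Cardinal | ∃ T : Set (Set ℕ), #T = c ∧ (∀ t ∈ T, t.Infinite) ∧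
    (∀ s ∈ T, ∀ t ∈ T, (s \ t).Finite ∨ (t \ s).Finite) ∧
    ∀ s : Set ℕ, s.Infinite → ∃ t ∈ T, (s \ t).Infinite }

/-- `ω* = βω ∖ ω`: the space of free ultrafilters on `ω`, with the subspace
topology inherited from `βω = Ultrafilter ℕ`. -/
def OmegaStar : Type := {𝒰 : Ultrafilter ℕ // ∀ A : Set ℕ, A.Finite → A ∉ 𝒰}

instance : TopologicalSpace OmegaStar :=
  instTopologicalSpaceSubtype

/-- `H` is a subgroup of the homeomorphism group of `ω*`. -/
structure IsHomeoSubgroup (H : Set (OmegaStar ≃ₜ OmegaStar)) : Prop where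
  one_mem : Homeomorph.refl OmegaStar ∈ H
  mul_mem : ∀ g ∈ H, ∀ h ∈ H, g.trans h ∈ H
  inv_mem : ∀ g ∈ H, g.symm ∈ H

/-- The dynamical system `(ω*, H)` is topologically transitive. -/
def IsTopTransitive (H : Set (OmegaStar ≃ₜ OmegaStar)) : Prop :=
  ∀ U : Set OmegaStar, IsOpen U → U.Nonempty → Dense (⋃ h ∈ H, ⇑h '' U)

/-- The dynamical system `(ω*, H)` has a dense orbit. -/
def HasDenseOrbit (H : Set (OmegaStar ≃ₜ OmegaStar)) : Prop :=
  ∃ x : OmegaStar, Dense {y | ∃ h ∈ H, h x = y}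

namespace OmegaStarAux

/-- Basic (cl)open set of `ω*`. -/
def Astar (A : Set ℕ) : Set OmegaStar := {x | A ∈ x.1}

lemma isOpen_Astar (A : Set ℕ) : IsOpen (Astar A) := by
  have h : Astar A = (Subtype.val : OmegaStar → Ultrafilter ℕ) ⁻¹' {u | A ∈ u} := rfl
  rw [h]
  exact (ultrafilter_isOpen_basic A).preimage continuous_subtype_val

lemma exists_mem_Astar {A : Set ℕ} (hA : A.Infinite) : ∃ x : OmegaStar, A ∈ x.1 := by
  have h : (Filter.cofinite ⊓ Filter.principal A).NeBot := hA.cofinite_inf_principal_neBot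
  obtain ⟨u, hu⟩ := Ultrafilter.exists_le (Filter.cofinite ⊓ Filter.principal A)
  refine ⟨⟨u, ?_⟩, ?_⟩
  · intro B hB hBu
    have h1 : Bᶜ ∈ u := (hu.trans inf_le_left) hB.compl_mem_cofinite
    exact (Ultrafilter.compl_mem_iff_notMem.mp h1) hBu
  · exact (hu.trans inf_le_right) (Filter.mem_principal_self A)

lemma Astar_nonempty {A : Set ℕ} (hA : A.Infinite) : (Astar A).Nonempty := by
  obtain ⟨x, hx⟩ := exists_mem_Astar hA
  exact ⟨x, hx⟩

lemma diff_finite_of_Astar_subset {A B : Set ℕ} (h : Astar A ⊆ Astar B) :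
    (A \ B).Finite := by
  by_contra hf
  obtain ⟨x, hx⟩ := exists_mem_Astar (hf : (A \ B).Infinite)
  have hA : A ∈ x.1 := Filter.mem_of_superset hx Set.diff_subset
  have hB : B ∈ x.1 := h hA
  have hBc : Bᶜ ∈ x.1 := Filter.mem_of_superset hx (by intro n hn; exact hn.2)
  exact (Ultrafilter.compl_mem_iff_notMem.mp hBc) hB

lemma exists_Astar_subset {U : Set OmegaStar} (hU : IsOpen U) {x : OmegaStar} (hx : x ∈ U) :
    ∃ A : Set ℕ, A.Infinite ∧ x ∈ Astar A ∧ Astar A ⊆ U := by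
  obtain ⟨V, hV, hVU⟩ := isOpen_induced_iff.mp hU
  have hxV : x.1 ∈ V := by
    rw [← hVU] at hx; exact hx
  obtain ⟨v, hv, hxv, hvV⟩ := ultrafilterBasis_is_basis.exists_subset_of_mem_open hxV hV
  obtain ⟨s, rfl⟩ := hv
  have hs : s ∈ x.1 := hxv
  refine ⟨s, ?_, hs, ?_⟩
  · by_contra hfin
    exact x.2 s (Set.not_infinite.mp hfin) hs
  · intro y hy
    have : y.1 ∈ V := hvV hy
    rw [← hVU]; exact this

lemma exists_pseudoInter (ht : towerNumber = Cardinal.continuum)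
    (T : Set (Set ℕ)) (hcard : #T < Cardinal.continuum)
    (hinf : ∀ t ∈ T, t.Infinite)
    (hchain : ∀ s ∈ T, ∀ t ∈ T, (s \ t).Finite ∨ (t \ s).Finite) :
    ∃ s : Set ℕ, s.Infinite ∧ ∀ t ∈ T, (s \ t).Finite := by
  by_contra hno
  push_neg at hno
  have hmem : #T ∈ { c : Cardinal | ∃ T : Set (Set ℕ), #T = c ∧ (∀ t ∈ T, t.Infinite) ∧
      (∀ s ∈ T, ∀ t ∈ T, (s \ t).Finite ∨ (t \ s).Finite) ∧
      ∀ s : Set ℕ, s.Infinite → ∃ t ∈ T, (s \ t).Infinite } := by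
    refine ⟨T, rfl, hinf, hchain, fun s hs => ?_⟩
    obtain ⟨t, htT, hts⟩ := hno s hs
    exact ⟨t, htT, hts⟩
  have h1 : towerNumber ≤ #T := csInf_le' hmem
  rw [ht] at h1
  exact absurd hcard (not_lt.mpr h1)

/-- The index type of the transfinite recursion. -/
noncomputable abbrev Idx : Type := Cardinal.continuum.ord.ToType

/-- The recursive tower construction. -/
noncomputable def tower (H : Set (OmegaStar ≃ₜ OmegaStar)) (σ : Idx → Set ℕ) : Idx → Set ℕ :=
  WellFounded.fix (IsWellFounded.wf : WellFounded ((· < ·) : Idx → Idx → Prop))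
    (fun i rec =>
      @dite (Set ℕ)
        (∃ B : Set ℕ, B.Infinite ∧ (∀ j, ∀ hj : j < i, (B \ rec j hj).Finite) ∧
          ∃ e ∈ H, Astar B ⊆ ⇑e '' Astar (σ i))
        (Classical.dec _) (fun h => h.choose) (fun _ => ∅))

lemma tower_eq (H : Set (OmegaStar ≃ₜ OmegaStar)) (σ : Idx → Set ℕ) (i : Idx) :
    tower H σ i =
      @dite (Set ℕ)
        (∃ B : Set ℕ, B.Infinite ∧ (∀ j, ∀ _ : j < i, (B \ tower H σ j).Finite) ∧
          ∃ e ∈ H, Astar B ⊆ ⇑e '' Astar (σ i))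
        (Classical.dec _) (fun h => h.choose) (fun _ => ∅) :=
  WellFounded.fix_eq _ _ i

lemma tower_spec (ht : towerNumber = Cardinal.continuum)
    (H : Set (OmegaStar ≃ₜ OmegaStar)) (htrans : IsTopTransitive H)
    (σ : Idx → Set ℕ) (hσ : ∀ i, (σ i).Infinite) (i : Idx) :
    (tower H σ i).Infinite ∧ (∀ j, j < i → (tower H σ i \ tower H σ j).Finite) ∧
      ∃ e ∈ H, Astar (tower H σ i) ⊆ ⇑e '' Astar (σ i) := by
  induction i using WellFounded.induction
    (IsWellFounded.wf : WellFounded ((· < ·) : Idx → Idx → Prop)) with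
  | _ i IH =>
  have hex : ∃ B : Set ℕ, B.Infinite ∧ (∀ j, ∀ _ : j < i, (B \ tower H σ j).Finite) ∧
      ∃ e ∈ H, Astar B ⊆ ⇑e '' Astar (σ i) := by
    set T : Set (Set ℕ) := tower H σ '' Set.Iio i with hT
    have hcard : #T < Cardinal.continuum :=
      lt_of_le_of_lt (Cardinal.mk_image_le (f := tower H σ) (s := Set.Iio i))
        (Cardinal.mk_Iio_ord_toType i)
    have hTinf : ∀ t ∈ T, t.Infinite := by
      rintro t ⟨j, hj, rfl⟩; exact (IH j hj).1
    have hTchain : ∀ s ∈ T, ∀ t ∈ T, (s \ t).Finite ∨ (t \ s).Finite := by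
      rintro s ⟨j, hj, rfl⟩ t ⟨k, hk, rfl⟩
      rcases lt_trichotomy j k with h | h | h
      · exact Or.inr ((IH k hk).2.1 j h)
      · subst h; exact Or.inl (by simp)
      · exact Or.inl ((IH j hj).2.1 k h)
    obtain ⟨C, hCinf, hCp⟩ := exists_pseudoInter ht T hcard hTinf hTchain
    have hdense := htrans (Astar (σ i)) (isOpen_Astar _) (Astar_nonempty (hσ i))
    obtain ⟨y, hyC, hyD⟩ :=
      (dense_iff_inter_open.mp hdense) (Astar C) (isOpen_Astar C) (Astar_nonempty hCinf)
    simp only [Set.mem_iUnion] at hyD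
    obtain ⟨e, he, hyIm⟩ := hyD
    have hWopen : IsOpen (Astar C ∩ ⇑e '' Astar (σ i)) :=
      (isOpen_Astar C).inter (e.isOpenMap _ (isOpen_Astar _))
    obtain ⟨B, hBinf, _, hBsub⟩ := exists_Astar_subset hWopen (⟨hyC, hyIm⟩ :
      y ∈ Astar C ∩ ⇑e '' Astar (σ i))
    refine ⟨B, hBinf, ?_, e, he, fun z hz => (hBsub hz).2⟩
    intro j hj
    have h1 : (B \ C).Finite := diff_finite_of_Astar_subset (fun z hz => (hBsub hz).1)
    have h2 : (C \ tower H σ j).Finite := hCp _ ⟨j, hj, rfl⟩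
    refine (h1.union h2).subset ?_
    intro n hn
    by_cases hC : n ∈ C
    · exact Or.inr ⟨hC, hn.2⟩
    · exact Or.inl ⟨hn.1, hC⟩
  rw [tower_eq]
  rw [dif_pos hex]
  exact hex.choose_spec

/-- From a `⊆*`-tower one gets a free ultrafilter containing all its members. -/
lemma exists_omegaStar_forall_mem {ι : Type*} [Nonempty ι] (g : ι → Set ℕ)
    (hinf : ∀ i, (g i).Infinite)
    (hdir : ∀ i j : ι, ∃ k, (g k \ g i).Finite ∧ (g k \ g j).Finite) :
    ∃ x : OmegaStar, ∀ i, g i ∈ x.1 := by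
  set F : ι → Filter ℕ := fun i => Filter.cofinite ⊓ Filter.principal (g i) with hF
  have hle : ∀ i j : ι, (g j \ g i).Finite → F j ≤ F i := by
    intro i j hji
    refine le_inf inf_le_left (Filter.le_principal_iff.mpr ?_)
    have hmem : (g j \ g i)ᶜ ∩ g j ∈ F j :=
      Filter.inter_mem_inf hji.compl_mem_cofinite (Filter.mem_principal_self _)
    refine Filter.mem_of_superset hmem ?_
    rintro n ⟨hn1, hn2⟩
    by_contra hni
    exact hn1 ⟨hn2, hni⟩
  have hne : ∀ i, (F i).NeBot := fun i => (hinf i).cofinite_inf_principal_neBot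
  have hd : Directed (· ≥ ·) F := by
    intro i j
    obtain ⟨k, hki, hkj⟩ := hdir i j
    exact ⟨k, hle i k hki, hle j k hkj⟩
  have hbot : (⨅ i, F i).NeBot := Filter.iInf_neBot_of_directed' hd hne
  obtain ⟨u, hu⟩ := Ultrafilter.exists_le (⨅ i, F i)
  have hfree : ∀ A : Set ℕ, A.Finite → A ∉ u := by
    intro A hA hAu
    have h1 : (u : Filter ℕ) ≤ Filter.cofinite :=
      le_trans hu (le_trans (iInf_le _ (Classical.arbitrary ι)) inf_le_left)
    exact (Ultrafilter.compl_mem_iff_notMem.mp (h1 hA.compl_mem_cofinite)) hAu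
  refine ⟨⟨u, hfree⟩, fun i => ?_⟩
  exact Filter.le_principal_iff.mp (le_trans hu (le_trans (iInf_le _ i) inf_le_right))

end OmegaStarAux

open OmegaStarAux in
theorem topTransitive_iff_denseOrbit
    (ht : towerNumber = Cardinal.continuum)
    (H : Set (OmegaStar ≃ₜ OmegaStar)) (hH : IsHomeoSubgroup H) :
    IsTopTransitive H ↔ HasDenseOrbit H := by
  constructor
  · -- hard direction
    intro htrans
    -- a surjection onto the infinite subsets of ℕ
    have hnι : Nonempty Idx :=
      Ordinal.toType_nonempty_iff_ne_zero.mpr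
        (by simp [Cardinal.ord_eq_zero, Cardinal.continuum_ne_zero])
    have hnA : Nonempty {A : Set ℕ // A.Infinite} := ⟨⟨Set.univ, Set.infinite_univ⟩⟩
    have hle : #{A : Set ℕ // A.Infinite} ≤ #Idx := by
      rw [Cardinal.mk_ord_toType]
      calc #{A : Set ℕ // A.Infinite} ≤ #(Set ℕ) := Cardinal.mk_subtype_le _
        _ ≤ Cardinal.continuum := by
            rw [Cardinal.mk_set, Cardinal.mk_nat, Cardinal.two_power_aleph0]
    obtain ⟨f⟩ := Cardinal.le_def _ _ |>.mp hle
    have hfsurj : Function.Surjective (Function.invFun f) :=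
      Function.invFun_surjective f.injective
    set σ : Idx → Set ℕ := fun i => (Function.invFun f i).1 with hσdef
    have hσ : ∀ i, (σ i).Infinite := fun i => (Function.invFun f i).2
    have hspec := tower_spec ht H htrans σ hσ
    set g : Idx → Set ℕ := tower H σ with hg
    -- an ultrafilter through the tower
    obtain ⟨x, hx⟩ := exists_omegaStar_forall_mem g (fun i => (hspec i).1) (by
      intro i j
      rcases le_total i j with h | h
      · rcases lt_or_eq_of_le h with hlt | heq
        · exact ⟨j, (hspec j).2.1 i hlt, by simp⟩
        · exact ⟨i, by simp, by simp [heq]⟩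
      · rcases lt_or_eq_of_le h with hlt | heq
        · exact ⟨i, by simp, (hspec i).2.1 j hlt⟩
        · exact ⟨i, by simp, by simp [heq]⟩)
    refine ⟨x, dense_iff_inter_open.mpr ?_⟩
    intro U hU hUne
    obtain ⟨x0, hx0⟩ := hUne
    obtain ⟨A, hAinf, _, hAsub⟩ := exists_Astar_subset hU hx0
    obtain ⟨i, hi⟩ := hfsurj ⟨A, hAinf⟩
    have hσi : σ i = A := congrArg Subtype.val hi
    obtain ⟨e, heH, hesub⟩ := (hspec i).2.2
    have hxi : x ∈ Astar (g i) := hx i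
    have := hesub hxi
    rw [hσi] at this
    obtain ⟨z, hzA, hez⟩ := this
    refine ⟨z, hAsub hzA, e.symm, hH.inv_mem e heH, ?_⟩
    rw [← hez]; exact e.symm_apply_apply z
  · -- easy direction
    rintro ⟨x, hx⟩ U hUopen hUne
    rw [dense_iff_inter_open]
    intro V hVopen hVne
    obtain ⟨p, hpU, h1, h1H, h1x⟩ := (dense_iff_inter_open.mp hx) U hUopen hUne
    obtain ⟨q, hqV, h2, h2H, h2x⟩ := (dense_iff_inter_open.mp hx) V hVopen hVne
    refine ⟨q, hqV, ?_⟩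
    simp only [Set.mem_iUnion]
    refine ⟨h1.symm.trans h2, hH.mul_mem _ (hH.inv_mem h1 h1H) _ h2H, p, hpU, ?_⟩
    rw [Homeomorph.trans_apply, ← h1x, Homeomorph.symm_apply_apply, h2x]
end

section
/- If H is a subgroup of the homeomorphism group of ω* = βω \ ω such that the dynamical system (ω*, H) is topologically transitive, then |H| ≥ 𝔱 (the tower number). -/
open Cardinal

/-!
Suppose `#H < 𝔱`. For `h ∈ H`, the infinite `A` such that `h` fixes every point of `A*` that it
maps into `A*` form a family that is open for `⊆*` and, by continuity of `h`, dense. Fewer than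
`𝔱` such families have a common member `A`: a `⊆*`-decreasing recursion along a well-order of
`H` never gets stuck, since its initial segments are towers of size `< 𝔱`. Split `A` into
disjoint infinite `B` and `C`; transitivity yields `h ∈ H` and `x ∈ B*` with `h x ∈ C* ⊆ A*`,
so `h x = x` lies in `B* ∩ C* = ∅`.
-/

open Filter Set

namespace OmegaStar

/-- The basic clopen set `A*`. -/
def basicOpen (A : Set ℕ) : Set OmegaStar := {x | A ∈ x.1}

variable {A B : Set ℕ}

theorem isOpen_basicOpen (A : Set ℕ) : IsOpen (basicOpen A) :=
  (ultrafilter_isOpen_basic A).preimage continuous_subtype_val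

theorem basicOpen_nonempty (hA : A.Infinite) : (basicOpen A).Nonempty := by
  have := hA.cofinite_inf_principal_neBot
  have hle : ↑(Ultrafilter.of (cofinite ⊓ 𝓟 A)) ≤ cofinite ⊓ 𝓟 A := Ultrafilter.of_le _
  refine ⟨⟨_, fun F hF hFu => ?_⟩, le_principal_iff.mp (hle.trans inf_le_right)⟩
  exact Ultrafilter.compl_notMem_iff.mpr hFu (hle.trans inf_le_left hF.compl_mem_cofinite)

theorem basicOpen_mono (h : A ⊆ B) : basicOpen A ⊆ basicOpen B :=
  fun _ hx => mem_of_superset hx h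

theorem basicOpen_inter (A B : Set ℕ) : basicOpen (A ∩ B) = basicOpen A ∩ basicOpen B :=
  ext fun _ => inter_mem_iff

theorem basicOpen_compl (A : Set ℕ) : basicOpen Aᶜ = (basicOpen A)ᶜ :=
  ext fun _ => Ultrafilter.compl_mem_iff_notMem

theorem basicOpen_empty : basicOpen ∅ = ∅ :=
  eq_empty_of_forall_notMem fun _ => Ultrafilter.empty_notMem

theorem basicOpen_subset_of_diff_finite (h : (A \ B).Finite) : basicOpen A ⊆ basicOpen B :=
  fun x hx => mem_of_superset (inter_mem hx (Ultrafilter.compl_mem_iff_notMem.mpr (x.2 _ h)))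
    fun _ ⟨hnA, hnAB⟩ => not_not.mp fun hnB => hnAB ⟨hnA, hnB⟩

theorem disjoint_basicOpen (h : Disjoint A B) : Disjoint (basicOpen A) (basicOpen B) := by
  rw [disjoint_iff_inter_eq_empty, ← basicOpen_inter, h.inter_eq, basicOpen_empty]

theorem infinite_of_mem_basicOpen {x : OmegaStar} (hx : x ∈ basicOpen A) : A.Infinite :=
  fun hA => x.2 A hA hx

theorem exists_basicOpen_subset {U : Set OmegaStar} (hU : IsOpen U) {x : OmegaStar}
    (hx : x ∈ U) : ∃ B, x ∈ basicOpen B ∧ basicOpen B ⊆ U := by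
  obtain ⟨t, ht, rfl⟩ := isOpen_induced_iff.mp hU
  obtain ⟨_, ⟨B, rfl⟩, hxB, hBt⟩ := ultrafilterBasis_is_basis.exists_subset_of_mem_open hx ht
  exact ⟨B, hxB, fun _ hy => hBt hy⟩

theorem exists_mem_basicOpen_compl_of_ne {x y : OmegaStar} (h : x ≠ y) :
    ∃ S, x ∈ basicOpen S ∧ y ∈ basicOpen Sᶜ := by
  by_contra! hxy
  exact h (Subtype.ext (Ultrafilter.eq_of_le fun S hS =>
    Ultrafilter.compl_notMem_iff.mp (hxy S hS)).symm)

theorem exists_subset_eqOn_id {f : OmegaStar → OmegaStar} (hf : Continuous f)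
    (hA : A.Infinite) :
    ∃ B ⊆ A, B.Infinite ∧ EqOn f id (basicOpen B ∩ f ⁻¹' basicOpen B) := by
  by_cases hfix : EqOn f id (basicOpen A)
  · exact ⟨A, subset_rfl, hA, hfix.mono inter_subset_left⟩
  obtain ⟨x, hxA, hfx⟩ : ∃ x ∈ basicOpen A, f x ≠ x := by simpa [EqOn] using hfix
  obtain ⟨S, hSx, hSfx⟩ := exists_mem_basicOpen_compl_of_ne hfx.symm
  -- by continuity, a whole neighbourhood `C*` of `x` is mapped off `S*`
  obtain ⟨C, hCx, hC⟩ := exists_basicOpen_subset ((isOpen_basicOpen Sᶜ).preimage hf) hSfx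
  refine ⟨A ∩ C ∩ S, inter_subset_left.trans inter_subset_left, ?_, ?_⟩
  · refine infinite_of_mem_basicOpen (x := x) ?_
    simp only [basicOpen_inter]
    exact ⟨⟨hxA, hCx⟩, hSx⟩
  · rintro y ⟨hy, hfy⟩
    have hfyS : f y ∈ basicOpen S := basicOpen_mono inter_subset_right hfy
    have hfySc : f y ∈ basicOpen Sᶜ :=
      hC (basicOpen_mono (inter_subset_left.trans inter_subset_right) hy)
    exact absurd hfyS (by rwa [basicOpen_compl] at hfySc)

theorem _root_.Set.EqOn.basicOpen_of_diff_finite {f : OmegaStar → OmegaStar}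
    (hf : EqOn f id (basicOpen A ∩ f ⁻¹' basicOpen A)) (h : (B \ A).Finite) :
    EqOn f id (basicOpen B ∩ f ⁻¹' basicOpen B) :=
  hf.mono (inter_subset_inter (basicOpen_subset_of_diff_finite h)
    (preimage_mono (basicOpen_subset_of_diff_finite h)))

end OmegaStar

theorem Set.Infinite.exists_disjoint_infinite_subsets {α : Type*} {A : Set α} (hA : A.Infinite) :
    ∃ B ⊆ A, ∃ C ⊆ A, B.Infinite ∧ C.Infinite ∧ Disjoint B C := by
  obtain ⟨B, C, rfl, hBC, hcard⟩ := hA.exists_union_disjoint_cardinal_eq_of_infinite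
  have hiff : B.Infinite ↔ C.Infinite := by
    simp only [← infinite_coe_iff, Cardinal.infinite_iff, hcard]
  have hB : B.Infinite := by
    by_contra hB
    exact hA ((not_infinite.mp hB).union (not_infinite.mp (mt hiff.mpr hB)))
  exact ⟨B, subset_union_left, C, subset_union_right, hB, hiff.mp hB, hBC⟩

def IsPseudoIntersection (s : Set ℕ) (T : Set (Set ℕ)) : Prop :=
  s.Infinite ∧ ∀ t ∈ T, (s \ t).Finite

theorem exists_isPseudoIntersection_of_card_lt_towerNumber {T : Set (Set ℕ)}
    (hinf : ∀ t ∈ T, t.Infinite) (hchain : ∀ s ∈ T, ∀ t ∈ T, (s \ t).Finite ∨ (t \ s).Finite)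
    (hT : #T < towerNumber) : ∃ s, IsPseudoIntersection s T := by
  by_contra! h
  refine hT.not_ge (csInf_le' ⟨T, rfl, hinf, hchain, fun s hs => ?_⟩)
  by_contra! hs'
  exact h s ⟨hs, hs'⟩

theorem exists_isPseudoIntersection_image {ι : Type} (r : ι → ι → Prop) [Std.Trichotomous r]
    {F : ι → Set ℕ} {S : Set ι} (hF : ∀ i ∈ S, IsPseudoIntersection (F i) (F '' {j | r j i}))
    (hS : #S < towerNumber) : ∃ s, IsPseudoIntersection s (F '' S) := by
  refine exists_isPseudoIntersection_of_card_lt_towerNumber ?_ ?_ (mk_image_le.trans_lt hS)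
  · rintro _ ⟨i, hi, rfl⟩
    exact (hF i hi).1
  · rintro _ ⟨i, hi, rfl⟩ _ ⟨j, hj, rfl⟩
    rcases trichotomous_of r i j with hij | rfl | hji
    · exact Or.inr ((hF j hj).2 _ (mem_image_of_mem F hij))
    · simp
    · exact Or.inl ((hF i hi).2 _ (mem_image_of_mem F hji))

section DenseIntersection

variable {ι : Type} (D : ι → Set (Set ℕ))
  (hdense : ∀ i A, A.Infinite → ∃ B ⊆ A, B.Infinite ∧ B ∈ D i)

open Classical in
/-- Junk value `∅` when `T` has no infinite pseudo-intersection. -/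
noncomputable def pickPseudoIntersection (i : ι) (T : Set (Set ℕ)) : Set ℕ :=
  if hT : ∃ s, IsPseudoIntersection s T then (hdense i _ hT.choose_spec.1).choose else ∅

theorem pickPseudoIntersection_spec {i : ι} {T : Set (Set ℕ)}
    (hT : ∃ s, IsPseudoIntersection s T) :
    IsPseudoIntersection (pickPseudoIntersection D hdense i T) T ∧
      pickPseudoIntersection D hdense i T ∈ D i := by
  obtain ⟨hsub, hinf, hD⟩ := (hdense i _ hT.choose_spec.1).choose_spec
  rw [pickPseudoIntersection, dif_pos hT]
  exact ⟨⟨hinf, fun t ht => (hT.choose_spec.2 t ht).subset (sdiff_subset_sdiff_left hsub)⟩, hD⟩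

noncomputable def denseTower : ι → Set ℕ :=
  IsWellFounded.fix WellOrderingRel fun i prev =>
    pickPseudoIntersection D hdense i (range fun j : {j // WellOrderingRel j i} => prev j j.2)

theorem denseTower_eq (i : ι) :
    denseTower D hdense i =
      pickPseudoIntersection D hdense i (denseTower D hdense '' {j | WellOrderingRel j i}) := by
  rw [image_eq_range, denseTower, IsWellFounded.fix_eq]
  rfl

theorem denseTower_spec (hι : #ι < towerNumber) (i : ι) :
    IsPseudoIntersection (denseTower D hdense i)
        (denseTower D hdense '' {j | WellOrderingRel j i}) ∧
      denseTower D hdense i ∈ D i := by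
  induction i using IsWellFounded.induction WellOrderingRel with
  | ind i ih =>
    rw [denseTower_eq]
    exact pickPseudoIntersection_spec D hdense <| exists_isPseudoIntersection_image
      WellOrderingRel (fun j hj => (ih j hj).1) ((mk_set_le _).trans_lt hι)

end DenseIntersection

/-- Fewer than `𝔱` dense open subsets of `([ω]^ω, ⊆*)` have a common member. -/
theorem exists_forall_mem_of_card_lt_towerNumber {ι : Type} (D : ι → Set (Set ℕ))
    (hdense : ∀ i A, A.Infinite → ∃ B ⊆ A, B.Infinite ∧ B ∈ D i)
    (hopen : ∀ i A B, A ∈ D i → (B \ A).Finite → B ∈ D i) (hι : #ι < towerNumber) :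
    ∃ A : Set ℕ, A.Infinite ∧ ∀ i, A ∈ D i := by
  have hspec := denseTower_spec D hdense hι
  obtain ⟨A, hA, hAT⟩ := exists_isPseudoIntersection_image WellOrderingRel (S := univ)
    (fun i _ => (hspec i).1) (mk_univ.trans_lt hι)
  exact ⟨A, hA, fun i => hopen i _ A (hspec i).2 (hAT _ (mem_image_of_mem _ (mem_univ i)))⟩

open OmegaStar in
theorem topTransitive_card_ge_tower_general
    (H : Set (OmegaStar ≃ₜ OmegaStar))
    (htr : IsTopTransitive H) :
    towerNumber ≤ #H := by
  by_contra! hH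
  obtain ⟨A, hA, hAfix⟩ := exists_forall_mem_of_card_lt_towerNumber
    (fun h : H => {A | EqOn h.1 id (basicOpen A ∩ h.1 ⁻¹' basicOpen A)})
    (fun h _ hA => exists_subset_eqOn_id h.1.continuous hA)
    (fun _ _ _ hfix hfin => hfix.basicOpen_of_diff_finite hfin) hH
  obtain ⟨B, hBA, C, hCA, hB, hC, hBC⟩ := hA.exists_disjoint_infinite_subsets
  obtain ⟨y, hy, hyC⟩ := (htr _ (isOpen_basicOpen B) (basicOpen_nonempty hB)).exists_mem_open
    (isOpen_basicOpen C) (basicOpen_nonempty hC)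
  obtain ⟨h, hh, x, hxB, rfl⟩ := mem_iUnion₂.mp hy
  have hfix : h x = x := hAfix ⟨h, hh⟩ ⟨basicOpen_mono hBA hxB, basicOpen_mono hCA hyC⟩
  exact (disjoint_basicOpen hBC).ne_of_mem hxB (hfix ▸ hyC) rfl

theorem topTransitive_card_ge_tower
    (H : Set (OmegaStar ≃ₜ OmegaStar)) (hH : IsHomeoSubgroup H)
    (htr : IsTopTransitive H) :
    towerNumber ≤ #H :=
  topTransitive_card_ge_tower_general H htr
end

section
/- For every cardinal κ < 𝔠 and every family {I_α}_{α∈κ} of infinite subsets of ω, there exists an almost disjoint family {A_α}_{α∈κ} of infinite subsets of ω such that A_α ⊆ I_α for every α ∈ κ. -/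
open Cardinal Set

noncomputable section ADR
open Classical

/-! ### Halves and binary partition trees -/

def half (b : Bool) (v : Set ℕ) : Set ℕ :=
  Set.range (fun k => Nat.nth (· ∈ v) (2 * k + cond b 1 0))

lemma half_subset {v : Set ℕ} (hv : v.Infinite) (b : Bool) : half b v ⊆ v := by
  rintro x ⟨k, rfl⟩
  exact Nat.nth_mem_of_infinite (p := (· ∈ v)) hv _

lemma half_infinite {v : Set ℕ} (hv : v.Infinite) (b : Bool) : (half b v).Infinite := by
  apply Set.infinite_range_of_injective
  intro a a' haa
  have := (Nat.nth_injective (p := (· ∈ v)) hv) haa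
  omega

lemma half_union {v : Set ℕ} (hv : v.Infinite) : half false v ∪ half true v = v := by
  apply Set.Subset.antisymm
  · rintro x (⟨k, rfl⟩ | ⟨k, rfl⟩) <;>
      exact Nat.nth_mem_of_infinite (p := (· ∈ v)) hv _
  · intro x hx
    have hc : Nat.nth (· ∈ v) (Nat.count (· ∈ v) x) = x := Nat.nth_count hx
    rcases Nat.even_or_odd (Nat.count (· ∈ v) x) with ⟨k, hk⟩ | ⟨k, hk⟩
    · left; exact ⟨k, by rw [← hc, hk]; norm_num; ring_nf⟩
    · right; exact ⟨k, by rw [← hc, hk]; norm_num⟩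

lemma half_disj {v : Set ℕ} (hv : v.Infinite) :
    half false v ∩ half true v = ∅ := by
  ext x
  simp only [mem_inter_iff, mem_empty_iff_false, iff_false, not_and]
  rintro ⟨k, hk⟩ ⟨j, hj⟩
  have : 2 * k + cond false 1 0 = 2 * j + cond true 1 0 :=
    (Nat.nth_injective (p := (· ∈ v)) hv) (hk.trans hj.symm)
  simp at this
  omega

def pieces (v : Set ℕ) : List Bool → Set ℕ
  | [] => v
  | b :: s => half b (pieces v s)

lemma pieces_infinite {v : Set ℕ} (hv : v.Infinite) : ∀ s, (pieces v s).Infinite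
  | [] => hv
  | b :: s => half_infinite (pieces_infinite hv s) b

lemma pieces_cons_subset {v : Set ℕ} (hv : v.Infinite) (b : Bool) (s : List Bool) :
    pieces v (b :: s) ⊆ pieces v s :=
  half_subset (pieces_infinite hv s) b

lemma pieces_subset_root {v : Set ℕ} (hv : v.Infinite) : ∀ s, pieces v s ⊆ v
  | [] => subset_rfl
  | b :: s => (pieces_cons_subset hv b s).trans (pieces_subset_root hv s)

lemma pieces_append_subset {v : Set ℕ} (hv : v.Infinite) (w s : List Bool) :
    pieces v (w ++ s) ⊆ pieces v s := by
  induction w with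
  | nil => simp
  | cons b w ih => exact (pieces_cons_subset hv b (w ++ s)).trans ih

lemma pieces_eq_union {v : Set ℕ} (hv : v.Infinite) (s : List Bool) :
    pieces v s = pieces v (false :: s) ∪ pieces v (true :: s) :=
  (half_union (pieces_infinite hv s)).symm

lemma pieces_disj {v : Set ℕ} (hv : v.Infinite) :
    ∀ s t : List Bool, s.length = t.length → s ≠ t → pieces v s ∩ pieces v t = ∅ := by
  intro s
  induction s with
  | nil =>
    intro t hlen hne
    cases t with
    | nil => exact absurd rfl hne
    | cons c t' => simp at hlen
  | cons b s ih =>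
    intro t hlen hne
    cases t with
    | nil => simp at hlen
    | cons c t' =>
      by_cases hst : s = t'
      · subst hst
        have hbc : b ≠ c := by rintro rfl; exact hne rfl
        cases b <;> cases c <;> simp_all [pieces]
        · exact half_disj (pieces_infinite hv s)
        · rw [Set.inter_comm]; exact half_disj (pieces_infinite hv s)
      · have h0 := ih t' (by simpa using hlen) hst
        apply Set.eq_empty_of_subset_empty
        calc pieces v (b :: s) ∩ pieces v (c :: t')
            ⊆ pieces v s ∩ pieces v t' :=
              Set.inter_subset_inter (pieces_cons_subset hv _ _) (pieces_cons_subset hv _ _)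
          _ = ∅ := h0

lemma pieces_tri_aux {v : Set ℕ} (hv : v.Infinite) {s t : List Bool}
    (hl : s.length ≤ t.length) :
    pieces v t ⊆ pieces v s ∨ pieces v s ∩ pieces v t = ∅ := by
  set t' := t.drop (t.length - s.length) with ht'
  have hlen : t'.length = s.length := by
    simp [ht']; omega
  have hsub : pieces v t ⊆ pieces v t' := by
    have h1 : t.take (t.length - s.length) ++ t' = t := List.take_append_drop _ _
    have := pieces_append_subset hv (t.take (t.length - s.length)) t'
    rwa [h1] at this
  by_cases hst : t' = s
  · left; rw [← hst]; exact hsub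
  · right
    apply Set.eq_empty_of_subset_empty
    calc pieces v s ∩ pieces v t ⊆ pieces v s ∩ pieces v t' :=
          Set.inter_subset_inter_right _ hsub
      _ = ∅ := pieces_disj hv s t' hlen.symm (Ne.symm hst)

lemma pieces_tri {v : Set ℕ} (hv : v.Infinite) (s t : List Bool) :
    pieces v s ⊆ pieces v t ∨ pieces v t ⊆ pieces v s ∨ pieces v s ∩ pieces v t = ∅ := by
  rcases le_total s.length t.length with hl | hl
  · rcases pieces_tri_aux hv hl with h | h
    · exact Or.inr (Or.inl h)
    · exact Or.inr (Or.inr h)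
  · rcases pieces_tri_aux hv hl with h | h
    · exact Or.inl h
    · exact Or.inr (Or.inr (by rw [Set.inter_comm]; exact h))

/-- every infinite set of naturals has an element above any bound -/
lemma inf_exists_gt {s : Set ℕ} (hs : s.Infinite) (n : ℕ) : ∃ m ∈ s, n < m :=
  hs.exists_gt n

/-! ### The key lemma -/

section Key

variable (F : Set (Set ℕ)) (S : Set ℕ)
variable (H : ∀ u, u ⊆ S → u.Infinite → ∃ x, x ∈ F ∧ (u ∩ x).Infinite ∧ (u \ x).Infinite)

def spl (v : Set ℕ) : Set ℕ :=
  if h : v ⊆ S ∧ v.Infinite then (H v h.1 h.2).choose else ∅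

lemma spl_spec {v : Set ℕ} (h1 : v ⊆ S) (h2 : v.Infinite) :
    spl F S H v ∈ F ∧ (v ∩ spl F S H v).Infinite ∧ (v \ spl F S H v).Infinite := by
  rw [spl, dif_pos ⟨h1, h2⟩]
  exact (H v h1 h2).choose_spec

def USet : List Bool → Set ℕ
  | [] => S
  | b :: s => if b then USet s \ spl F S H (USet s) else USet s ∩ spl F S H (USet s)

lemma USet_subset : ∀ s, USet F S H s ⊆ S
  | [] => subset_rfl
  | b :: s => by
    cases b <;> simp only [USet, if_true, if_false, Bool.false_eq_true] <;>
      intro x hx <;> exact USet_subset s (by exact hx.1)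

lemma USet_infinite (hS : S.Infinite) : ∀ s, (USet F S H s).Infinite
  | [] => hS
  | b :: s => by
    have h := spl_spec F S H (USet_subset F S H s) (USet_infinite hS s)
    cases b
    · simpa only [USet, Bool.false_eq_true, if_false] using h.2.1
    · simpa only [USet, if_true] using h.2.2

lemma USet_cons_subset (b : Bool) (s : List Bool) : USet F S H (b :: s) ⊆ USet F S H s := by
  cases b <;> simp only [USet, if_true, Bool.false_eq_true, if_false] <;>
    intro x hx <;> exact hx.1

def pre (z : ℕ → Bool) : ℕ → List Bool
  | 0 => []
  | k + 1 => z k :: pre z k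

lemma pre_length (z : ℕ → Bool) : ∀ k, (pre z k).length = k
  | 0 => rfl
  | k + 1 => by simp [pre, pre_length z k]

lemma pre_eq_of_agree {z z' : ℕ → Bool} : ∀ {k}, (∀ i < k, z i = z' i) → pre z k = pre z' k
  | 0, _ => rfl
  | k + 1, h => by
    simp only [pre]
    rw [h k (Nat.lt_succ_self k), pre_eq_of_agree (fun i hi => h i (hi.trans (Nat.lt_succ_self k)))]

lemma USet_pre_mono (z : ℕ → Bool) {i j : ℕ} (hij : i ≤ j) :
    USet F S H (pre z j) ⊆ USet F S H (pre z i) := by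
  induction j with
  | zero => simp_all
  | succ j ih =>
    rcases Nat.lt_or_ge i (j+1) with h | h
    · exact (USet_cons_subset F S H (z j) (pre z j)).trans (ih (Nat.lt_succ_iff.mp h))
    · have : i = j + 1 := le_antisymm hij h
      subst this; exact subset_rfl

def gz (z : ℕ → Bool) : ℕ → ℕ
  | 0 => if h : (USet F S H (pre z 0)).Infinite then (inf_exists_gt h 0).choose else 0
  | k + 1 => if h : (USet F S H (pre z (k+1))).Infinite
      then (inf_exists_gt h (gz z k)).choose else 0

lemma gz_mem (hS : S.Infinite) (z : ℕ → Bool) : ∀ k, gz F S H z k ∈ USet F S H (pre z k)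
  | 0 => by
    rw [gz, dif_pos (USet_infinite F S H hS _)]
    exact (inf_exists_gt (USet_infinite F S H hS _) 0).choose_spec.1
  | k + 1 => by
    rw [gz, dif_pos (USet_infinite F S H hS _)]
    exact (inf_exists_gt (USet_infinite F S H hS _) _).choose_spec.1

lemma gz_lt (hS : S.Infinite) (z : ℕ → Bool) (k : ℕ) : gz F S H z k < gz F S H z (k+1) := by
  rw [gz, dif_pos (USet_infinite F S H hS _)]
  exact (inf_exists_gt (USet_infinite F S H hS _) _).choose_spec.2

lemma gz_strictMono (hS : S.Infinite) (z : ℕ → Bool) : StrictMono (gz F S H z) :=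
  strictMono_nat_of_lt_succ (gz_lt F S H hS z)

def vz (z : ℕ → Bool) : Set ℕ := Set.range (gz F S H z)

lemma vz_subset (hS : S.Infinite) (z : ℕ → Bool) : vz F S H z ⊆ S := by
  rintro x ⟨k, rfl⟩
  exact USet_subset F S H _ (gz_mem F S H hS z k)

lemma vz_infinite (hS : S.Infinite) (z : ℕ → Bool) : (vz F S H z).Infinite :=
  Set.infinite_range_of_injective (gz_strictMono F S H hS z).injective

lemma vz_diff_finite (hS : S.Infinite) (z : ℕ → Bool) (k : ℕ) :
    (vz F S H z \ USet F S H (pre z k)).Finite := by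
  apply Set.Finite.subset (Set.Finite.image (gz F S H z) (Set.finite_Iio k))
  rintro x ⟨⟨j, rfl⟩, hnot⟩
  refine ⟨j, ?_, rfl⟩
  simp only [mem_Iio]
  by_contra hjk
  push_neg at hjk
  exact hnot (USet_pre_mono F S H z hjk (gz_mem F S H hS z j))

def Tz (hS : S.Infinite) (z : ℕ → Bool) : Set ℕ :=
  (H (vz F S H z) (vz_subset F S H hS z) (vz_infinite F S H hS z)).choose

lemma Tz_spec (hS : S.Infinite) (z : ℕ → Bool) :
    Tz F S H hS z ∈ F ∧ (vz F S H z ∩ Tz F S H hS z).Infinite ∧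
      (vz F S H z \ Tz F S H hS z).Infinite :=
  (H (vz F S H z) (vz_subset F S H hS z) (vz_infinite F S H hS z)).choose_spec

lemma finite_of_subset_union {a b c : Set ℕ} (h : a ⊆ b ∪ c) (hb : b.Finite) (hc : c.Finite) :
    a.Finite := (hb.union hc).subset h

lemma Tz_ne (hS : S.Infinite)
    (htri : ∀ x ∈ F, ∀ y ∈ F, x ≠ y → (x ∩ y).Finite ∨ (x \ y).Finite ∨ (y \ x).Finite)
    {z z' : ℕ → Bool} {m : ℕ} (hpre : pre z m = pre z' m)
    (hzm : z m = false) (hzm' : z' m = true) : Tz F S H hS z ≠ Tz F S H hS z' := by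
  intro hTT
  set s := pre z m with hs
  set t := spl F S H (USet F S H s) with ht
  have hUs : (USet F S H s).Infinite := USet_infinite F S H hS s
  have htmem : t ∈ F := (spl_spec F S H (USet_subset F S H s) hUs).1
  -- vz z is almost inside t
  have hz1 : (vz F S H z \ t).Finite := by
    have h1 : (vz F S H z \ USet F S H (pre z (m+1))).Finite := vz_diff_finite F S H hS z (m+1)
    apply h1.subset
    intro x hx
    refine ⟨hx.1, fun hmem => hx.2 ?_⟩
    have : USet F S H (pre z (m+1)) = USet F S H s ∩ t := by
      simp only [pre, hzm, ← hs, USet, Bool.false_eq_true, if_false, ht]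
    rw [this] at hmem
    exact hmem.2
  -- vz z' is almost disjoint from t
  have hz2 : (vz F S H z' ∩ t).Finite := by
    have h1 : (vz F S H z' \ USet F S H (pre z' (m+1))).Finite := vz_diff_finite F S H hS z' (m+1)
    apply h1.subset
    intro x hx
    refine ⟨hx.1, fun hmem => ?_⟩
    have : USet F S H (pre z' (m+1)) = USet F S H s \ t := by
      simp only [pre, hzm', USet, if_true, ht]
      rw [← hpre]
    rw [this] at hmem
    exact hmem.2 hx.2
  set T := Tz F S H hS z with hT
  have hTspec := Tz_spec F S H hS z
  have hTspec' := Tz_spec F S H hS z'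
  rw [← hTT] at hTspec'
  by_cases hTt : T = t
  · rw [← hTt] at hz1
    exact hTspec.2.2 hz1
  · rcases htri T hTspec.1 t htmem hTt with h | h | h
    · -- (T ∩ t).Finite : contradicts (vz z ∩ T).Infinite
      apply hTspec.2.1
      apply finite_of_subset_union (b := vz F S H z \ t) (c := T ∩ t) _ hz1 h
      intro x hx
      by_cases hxt : x ∈ t
      · exact Or.inr ⟨hx.2, hxt⟩
      · exact Or.inl ⟨hx.1, hxt⟩
    · -- (T \ t).Finite : contradicts (vz z' ∩ T).Infinite
      apply hTspec'.2.1
      apply finite_of_subset_union (b := T \ t) (c := vz F S H z' ∩ t) _ h hz2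
      intro x hx
      by_cases hxt : x ∈ t
      · exact Or.inr ⟨hx.1, hxt⟩
      · exact Or.inl ⟨hx.2, hxt⟩
    · -- (t \ T).Finite : contradicts (vz z \ T).Infinite
      apply hTspec.2.2
      apply finite_of_subset_union (b := vz F S H z \ t) (c := t \ T) _ hz1 h
      intro x hx
      by_cases hxt : x ∈ t
      · exact Or.inr ⟨hxt, hx.2⟩
      · exact Or.inl ⟨hx.1, hxt⟩

end Key

lemma key (F : Set (Set ℕ)) (hF : #F < continuum)
    (htri : ∀ x ∈ F, ∀ y ∈ F, x ≠ y → (x ∩ y).Finite ∨ (x \ y).Finite ∨ (y \ x).Finite)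
    (S : Set ℕ) (hS : S.Infinite) :
    ∃ v, v ⊆ S ∧ v.Infinite ∧ ∀ x, x ∈ F → (v ∩ x).Finite ∨ (v \ x).Finite := by
  by_contra hcon
  push_neg at hcon
  have H : ∀ u, u ⊆ S → u.Infinite → ∃ x, x ∈ F ∧ (u ∩ x).Infinite ∧ (u \ x).Infinite := by
    intro u h1 h2
    obtain ⟨x, hx1, hx2⟩ := hcon u h1 h2
    exact ⟨x, hx1, hx2.1, hx2.2⟩
  have hinj : Function.Injective (fun z : ℕ → Bool =>
      (⟨Tz F S H hS z, (Tz_spec F S H hS z).1⟩ : F)) := by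
    intro z z' hzz
    by_contra hne
    have : ∃ k, z k ≠ z' k := Function.ne_iff.mp hne
    classical
    set m := Nat.find this with hm
    have hmspec : z m ≠ z' m := Nat.find_spec this
    have hagree : ∀ i < m, z i = z' i := fun i hi => not_not.mp (Nat.find_min this hi)
    have hpre : pre z m = pre z' m := pre_eq_of_agree hagree
    have hval : Tz F S H hS z = Tz F S H hS z' := congrArg Subtype.val hzz
    cases hz : z m
    · have hz' : z' m = true := by
        cases hz'' : z' m
        · rw [hz, hz''] at hmspec; exact absurd rfl hmspec
        · rfl
      exact Tz_ne F S H hS htri hpre hz hz' hval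
    · have hz' : z' m = false := by
        cases hz'' : z' m
        · rfl
        · rw [hz, hz''] at hmspec; exact absurd rfl hmspec
      exact Tz_ne F S H hS htri hpre.symm hz' hz hval.symm
  have hle : #(ℕ → Bool) ≤ #F := Cardinal.mk_le_of_injective hinj
  have heq : #(ℕ → Bool) = continuum := by
    rw [← Cardinal.power_def Bool ℕ, Cardinal.mk_bool, Cardinal.mk_nat,
      Cardinal.two_power_aleph0]
  rw [heq] at hle
  exact absurd hle (not_le.mpr hF)
/-! ### Main construction -/

section Main

variable {ι : Type} (r : ι → ι → Prop) [IsWellOrder ι r] (I : ι → Set ℕ)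

def stepFun (γ : ι) (f : ∀ η, r η γ → Set ℕ) : Set ℕ :=
  if h : ∃ v, v ⊆ I γ ∧ v.Infinite ∧ ∀ x, (∃ η, ∃ hr : r η γ, ∃ s, x = pieces (f η hr) s) →
      ((v ∩ x).Finite ∨ (v \ x).Finite) then h.choose else ∅

def uu : ι → Set ℕ := (IsWellFounded.wf : WellFounded r).fix (stepFun r I)

def Fam (γ : ι) : Set (Set ℕ) := {x | ∃ η, ∃ _ : r η γ, ∃ s, x = pieces (uu r I η) s}

lemma uu_fix (γ : ι) : uu r I γ = stepFun r I γ (fun η _ => uu r I η) :=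
  WellFounded.fix_eq _ _ _

lemma uu_spec (hκ : #ι < continuum) (hI : ∀ α, (I α).Infinite) :
    ∀ γ, (uu r I γ).Infinite ∧ uu r I γ ⊆ I γ ∧
      ∀ x ∈ Fam r I γ, ((uu r I γ) ∩ x).Finite ∨ ((uu r I γ) \ x).Finite := by
  intro γ
  refine WellFounded.induction (C := fun γ => (uu r I γ).Infinite ∧ uu r I γ ⊆ I γ ∧
      ∀ x ∈ Fam r I γ, ((uu r I γ) ∩ x).Finite ∨ ((uu r I γ) \ x).Finite)
    (IsWellFounded.wf : WellFounded r) γ ?_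
  intro γ IH
  have hsub : Fam r I γ ⊆ Set.range (fun p : ι × List Bool => pieces (uu r I p.1) p.2) := by
    rintro x ⟨η, hr, s, rfl⟩; exact ⟨(η, s), rfl⟩
  have hcard : #(Fam r I γ) < continuum := by
    calc #(Fam r I γ) ≤ #(Set.range (fun p : ι × List Bool => pieces (uu r I p.1) p.2)) :=
          Cardinal.mk_le_mk_of_subset hsub
      _ ≤ #(ι × List Bool) := Cardinal.mk_range_le
      _ = #ι * #(List Bool) := by rw [Cardinal.mk_prod, Cardinal.lift_id, Cardinal.lift_id]
      _ ≤ #ι * ℵ₀ := mul_le_mul_right Cardinal.mk_le_aleph0 _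
      _ < continuum :=
          Cardinal.mul_lt_of_lt Cardinal.aleph0_le_continuum hκ Cardinal.aleph0_lt_continuum
  have htri : ∀ x ∈ Fam r I γ, ∀ y ∈ Fam r I γ, x ≠ y →
      (x ∩ y).Finite ∨ (x \ y).Finite ∨ (y \ x).Finite := by
    rintro x ⟨η, hrη, s, rfl⟩ y ⟨η', hrη', s', rfl⟩ hne
    rcases trichotomous_of r η η' with hlt | heq | hgt
    · have hη' := IH η' hrη'
      have hx : pieces (uu r I η) s ∈ Fam r I η' := ⟨η, hlt, s, rfl⟩
      rcases hη'.2.2 _ hx with h | h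
      · left
        apply h.subset
        intro a ha
        exact ⟨pieces_subset_root hη'.1 s' ha.2, ha.1⟩
      · right; right
        apply h.subset
        intro a ha
        exact ⟨pieces_subset_root hη'.1 s' ha.1, ha.2⟩
    · subst heq
      have hη := IH η hrη
      rcases pieces_tri hη.1 s s' with h | h | h
      · right; left; rw [Set.diff_eq_empty.mpr h]; exact Set.finite_empty
      · right; right; rw [Set.diff_eq_empty.mpr h]; exact Set.finite_empty
      · left; rw [h]; exact Set.finite_empty
    · have hη := IH η hrη
      have hy : pieces (uu r I η') s' ∈ Fam r I η := ⟨η', hgt, s', rfl⟩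
      rcases hη.2.2 _ hy with h | h
      · left
        apply h.subset
        intro a ha
        exact ⟨pieces_subset_root hη.1 s ha.1, ha.2⟩
      · right; left
        apply h.subset
        intro a ha
        exact ⟨pieces_subset_root hη.1 s ha.1, ha.2⟩
  have hex := key (Fam r I γ) hcard htri (I γ) (hI γ)
  have hex' : ∃ v, v ⊆ I γ ∧ v.Infinite ∧
      ∀ x, (∃ η, ∃ hr : r η γ, ∃ s, x = pieces ((fun (η : ι) (_ : r η γ) => uu r I η) η hr) s) →
        ((v ∩ x).Finite ∨ (v \ x).Finite) := hex
  have hval : uu r I γ = hex'.choose := by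
    rw [uu_fix r I γ]
    unfold stepFun
    rw [dif_pos hex']
  obtain ⟨h1, h2, h3⟩ := hex'.choose_spec
  rw [hval]
  exact ⟨h2, h1, fun x hx => h3 x hx⟩

/-- the prefix of the branch through `uu α`'s partition tree along which `uu β` lives -/
def pcF (α β : ι) : ℕ → List Bool
  | 0 => []
  | k + 1 => (if (uu r I β ∩ pieces (uu r I α) (true :: pcF α β k)).Infinite
      then true else false) :: pcF α β k

def codeF (α β : ι) (k : ℕ) : Bool :=
  if (uu r I β ∩ pieces (uu r I α) (true :: pcF r I α β k)).Infinite then true else false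

lemma pcF_succ (α β : ι) (k : ℕ) :
    pcF r I α β (k + 1) = codeF r I α β k :: pcF r I α β k := rfl

lemma pcF_len (α β : ι) : ∀ k, (pcF r I α β k).length = k
  | 0 => rfl
  | k + 1 => by simp [pcF, pcF_len α β k]

lemma code_spec (hκ : #ι < continuum) (hI : ∀ α, (I α).Infinite) {α β : ι} (hr : r α β)
    (hmeet : (uu r I β ∩ uu r I α).Infinite) :
    ∀ k, (uu r I β ∩ pieces (uu r I α) (pcF r I α β k)).Infinite ∧
         (uu r I β \ pieces (uu r I α) (pcF r I α β k)).Finite := by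
  have hvα : (uu r I α).Infinite := (uu_spec r I hκ hI α).1
  have huns : ∀ s : List Bool,
      (uu r I β ∩ pieces (uu r I α) s).Finite ∨ (uu r I β \ pieces (uu r I α) s).Finite :=
    fun s => (uu_spec r I hκ hI β).2.2 _ ⟨α, hr, s, rfl⟩
  intro k
  induction k with
  | zero =>
    refine ⟨hmeet, ?_⟩
    rcases huns [] with h | h
    · exact absurd h hmeet
    · exact h
  | succ k ih =>
    have hsplit : pieces (uu r I α) (pcF r I α β k) =
        pieces (uu r I α) (false :: pcF r I α β k) ∪
        pieces (uu r I α) (true :: pcF r I α β k) := pieces_eq_union hvα _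
    by_cases ht : (uu r I β ∩ pieces (uu r I α) (true :: pcF r I α β k)).Infinite
    · have hc : codeF r I α β k = true := if_pos ht
      rw [pcF_succ, hc]
      refine ⟨ht, ?_⟩
      rcases huns (true :: pcF r I α β k) with h | h
      · exact absurd h ht
      · exact h
    · have hfalse : (uu r I β ∩ pieces (uu r I α) (false :: pcF r I α β k)).Infinite := by
        intro hff
        apply ih.1
        rw [hsplit, Set.inter_union_distrib_left]
        exact hff.union (Set.not_infinite.mp ht)
      have hc : codeF r I α β k = false := if_neg ht
      rw [pcF_succ, hc]
      refine ⟨hfalse, ?_⟩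
      rcases huns (false :: pcF r I α β k) with h | h
      · exact absurd h hfalse
      · exact h

lemma exists_zstar (hκ : #ι < continuum) (α : ι) :
    ∃ z : ℕ → Bool, z ∉ Set.range (fun β => codeF r I α β) := by
  by_contra h
  push_neg at h
  have huniv : Set.range (fun β => codeF r I α β) = Set.univ := eq_univ_of_forall h
  have h1 : (continuum : Cardinal) ≤ #ι := by
    have heq : #(ℕ → Bool) = continuum := by
      rw [← Cardinal.power_def Bool ℕ, Cardinal.mk_bool, Cardinal.mk_nat,
        Cardinal.two_power_aleph0]
    calc (continuum : Cardinal) = #(ℕ → Bool) := heq.symm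
      _ = #(Set.range (fun β => codeF r I α β)) := by
          rw [huniv]; exact Cardinal.mk_univ.symm
      _ ≤ #ι := Cardinal.mk_range_le
  exact absurd h1 (not_le.mpr hκ)

def zstar (hκ : #ι < continuum) (α : ι) : ℕ → Bool := (exists_zstar r I hκ α).choose

lemma zstar_spec (hκ : #ι < continuum) (α : ι) :
    zstar r I hκ α ∉ Set.range (fun β => codeF r I α β) := (exists_zstar r I hκ α).choose_spec

lemma pieces_pre_mono {v : Set ℕ} (hv : v.Infinite) (z : ℕ → Bool) {i j : ℕ} (hij : i ≤ j) :
    pieces v (pre z j) ⊆ pieces v (pre z i) := by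
  induction j with
  | zero =>
    have : i = 0 := Nat.le_zero.mp hij
    subst this; exact subset_rfl
  | succ j ih =>
    rcases Nat.lt_or_ge i (j + 1) with h | h
    · exact (pieces_cons_subset hv _ _).trans (ih (Nat.lt_succ_iff.mp h))
    · have : i = j + 1 := le_antisymm hij h
      subst this; exact subset_rfl

def gA (hκ : #ι < continuum) (α : ι) : ℕ → ℕ
  | 0 => if h : (pieces (uu r I α) (pre (zstar r I hκ α) 0)).Infinite
      then (inf_exists_gt h 0).choose else 0
  | k + 1 => if h : (pieces (uu r I α) (pre (zstar r I hκ α) (k + 1))).Infinite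
      then (inf_exists_gt h (gA hκ α k)).choose else 0

def AA (hκ : #ι < continuum) (α : ι) : Set ℕ := Set.range (gA r I hκ α)

lemma gA_mem (hκ : #ι < continuum) (hI : ∀ α, (I α).Infinite) (α : ι) :
    ∀ k, gA r I hκ α k ∈ pieces (uu r I α) (pre (zstar r I hκ α) k)
  | 0 => by
    have h := pieces_infinite (uu_spec r I hκ hI α).1 (pre (zstar r I hκ α) 0)
    rw [gA, dif_pos h]
    exact (inf_exists_gt h 0).choose_spec.1
  | k + 1 => by
    have h := pieces_infinite (uu_spec r I hκ hI α).1 (pre (zstar r I hκ α) (k + 1))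
    rw [gA, dif_pos h]
    exact (inf_exists_gt h _).choose_spec.1

lemma gA_lt (hκ : #ι < continuum) (hI : ∀ α, (I α).Infinite) (α : ι) (k : ℕ) :
    gA r I hκ α k < gA r I hκ α (k + 1) := by
  have h := pieces_infinite (uu_spec r I hκ hI α).1 (pre (zstar r I hκ α) (k + 1))
  rw [gA, dif_pos h]
  exact (inf_exists_gt h _).choose_spec.2

lemma AA_infinite (hκ : #ι < continuum) (hI : ∀ α, (I α).Infinite) (α : ι) :
    (AA r I hκ α).Infinite :=
  Set.infinite_range_of_injective (strictMono_nat_of_lt_succ (gA_lt r I hκ hI α)).injective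

lemma AA_subset_uu (hκ : #ι < continuum) (hI : ∀ α, (I α).Infinite) (α : ι) :
    AA r I hκ α ⊆ uu r I α := by
  rintro x ⟨k, rfl⟩
  exact pieces_subset_root (uu_spec r I hκ hI α).1 _ (gA_mem r I hκ hI α k)

lemma AA_subset (hκ : #ι < continuum) (hI : ∀ α, (I α).Infinite) (α : ι) :
    AA r I hκ α ⊆ I α :=
  (AA_subset_uu r I hκ hI α).trans (uu_spec r I hκ hI α).2.1

lemma AA_ad (hκ : #ι < continuum) (hI : ∀ α, (I α).Infinite) {α β : ι} (hr : r α β) :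
    (AA r I hκ α ∩ AA r I hκ β).Finite := by
  by_cases hfin : (uu r I β ∩ uu r I α).Finite
  · apply hfin.subset
    intro x hx
    exact ⟨AA_subset_uu r I hκ hI β hx.2, AA_subset_uu r I hκ hI α hx.1⟩
  · have hmeet : (uu r I β ∩ uu r I α).Infinite := hfin
    have hvα : (uu r I α).Infinite := (uu_spec r I hκ hI α).1
    set z := zstar r I hκ α with hz
    have hzne : z ≠ codeF r I α β := by
      intro h
      exact zstar_spec r I hκ α ⟨β, h.symm⟩
    obtain ⟨m, hm⟩ := Function.ne_iff.mp hzne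
    have hlistne : pre z (m + 1) ≠ pcF r I α β (m + 1) := by
      intro heq
      rw [pcF_succ] at heq
      have : z m = codeF r I α β m := by
        have := heq
        simp only [pre] at this
        exact (List.cons.injEq _ _ _ _ ▸ this : _ ∧ _).1
      exact hm this
    have hdisj : pieces (uu r I α) (pre z (m + 1)) ∩
        pieces (uu r I α) (pcF r I α β (m + 1)) = ∅ :=
      pieces_disj hvα _ _ (by rw [pre_length, pcF_len]) hlistne
    have hsub : AA r I hκ α ∩ AA r I hκ β ⊆
        (gA r I hκ α '' (Set.Iic m)) ∪
        (uu r I β \ pieces (uu r I α) (pcF r I α β (m + 1))) := by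
      rintro x ⟨⟨k, rfl⟩, hxB⟩
      rcases le_or_gt k m with hk | hk
      · exact Or.inl ⟨k, hk, rfl⟩
      · right
        refine ⟨AA_subset_uu r I hκ hI β hxB, fun hmem => ?_⟩
        have h1 : gA r I hκ α k ∈ pieces (uu r I α) (pre z (m + 1)) :=
          pieces_pre_mono hvα z hk (gA_mem r I hκ hI α k)
        have hmemint : gA r I hκ α k ∈ pieces (uu r I α) (pre z (m + 1)) ∩
            pieces (uu r I α) (pcF r I α β (m + 1)) := ⟨h1, hmem⟩
        rw [hdisj] at hmemint
        exact hmemint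
    apply Set.Finite.subset _ hsub
    exact ((Set.finite_Iic m).image _).union (code_spec r I hκ hI hr hmeet (m + 1)).2

end Main

theorem almost_disjoint_refinement (ι : Type) (hκ : #ι < Cardinal.continuum)
    (I : ι → Set ℕ) (hI : ∀ α, (I α).Infinite) :
    ∃ A : ι → Set ℕ, (∀ α, (A α).Infinite) ∧ (∀ α, A α ⊆ I α) ∧
      ∀ α β, α ≠ β → (A α ∩ A β).Finite := by
  classical
  refine ⟨AA (WellOrderingRel) I hκ, fun α => AA_infinite _ I hκ hI α,
    fun α => AA_subset _ I hκ hI α, fun α β hne => ?_⟩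
  rcases trichotomous_of WellOrderingRel α β with h | h | h
  · exact AA_ad _ I hκ hI h
  · exact absurd h hne
  · rw [Set.inter_comm]
    exact AA_ad _ I hκ hI h

end ADR
end

section
/- The tower number 𝔱 is a regular cardinal. -/
open Cardinal

/-!
A tower `T` of size `𝔱`, preordered by reverse almost inclusion, is a total preorder, and every
cofinal (that is, `⊆*`-coinitial) subset of it is again a tower. Hence `𝔱` is the cofinality of
a total preorder without a top element. Such a cofinality is always regular: after identifying
almost equal elements the order is linear, and the "records" of a well-ordering of it form a
well-ordered cofinal subset, whose cofinality is that of an ordinal.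
-/

open Set

theorem Set.Finite.diff_trans {α : Type*} {a b c : Set α} (hab : (a \ b).Finite)
    (hbc : (b \ c).Finite) : (a \ c).Finite :=
  (hab.union hbc).subset (sdiff_triangle a b c)

theorem Set.Infinite.exists_infinite_subset_infinite_diff {α : Type*} {s : Set α}
    (hs : s.Infinite) : ∃ u ⊆ s, u.Infinite ∧ (s \ u).Infinite := by
  let f : ℕ → α := fun n => hs.natEmbedding s n
  have hf : Function.Injective f := Subtype.val_injective.comp (hs.natEmbedding s).injective
  have hmem (n : ℕ) : f n ∈ s := (hs.natEmbedding s n).2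
  refine ⟨range (fun n => f (2 * n)), range_subset_iff.2 fun n => hmem _,
    infinite_range_of_injective (hf.comp fun m n h => by omega), ?_⟩
  refine infinite_of_injective_forall_mem (f := fun n => f (2 * n + 1))
    (hf.comp fun m n h => by omega) fun n => ⟨hmem _, ?_⟩
  rintro ⟨m, hm⟩
  have := hf hm
  omega

namespace Order

theorem cof_antisymmetrization (α : Type*) [Preorder α] :
    cof (Antisymmetrization α (· ≤ ·)) = cof α := by
  let f := toAntisymmetrization (α := α) (· ≤ ·)
  let g := ofAntisymmetrization (α := α) (· ≤ ·)
  have hfg : ∀ a, f (g a) = a := toAntisymmetrization_ofAntisymmetrization _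
  have gc : GaloisConnection f g := fun a b => by
    conv_lhs => rw [← hfg b]
    exact Iff.rfl
  have gc' : GaloisConnection g f := fun a b => by
    conv_rhs => rw [← hfg a]
    exact Iff.rfl
  exact le_antisymm gc'.cof_le gc.cof_le

theorem cof_ord_cof_of_linearOrder (α : Type*) [LinearOrder α] : (cof α).ord.cof = cof α := by
  let t := {a : α | ∀ b, WellOrderingRel b a → b < a}
  have ht : IsCofinal t := isCofinal_setOfPred_imp_lt WellOrderingRel
  -- Between records, `<` is contained in the well-ordering.
  have hsub : Subrelation (α := t) (· < ·) (fun a b => WellOrderingRel a.1 b.1) := by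
    intro a b hab
    rcases trichotomous_of WellOrderingRel a.1 b.1 with h | h | h
    · exact h
    · exact absurd (Subtype.ext h) hab.ne
    · exact absurd (a.2 b.1 h) hab.not_gt
  have : WellFoundedLT t := ⟨hsub.wf (InvImage.wf _ WellOrderingRel.isWellOrder.wf)⟩
  rw [← cof_eq_of_isCofinal ht, Order.cof_ord_cof]

theorem isRegular_cof (α : Type*) [Preorder α] [@Std.Total α (· ≤ ·)] [Nonempty α]
    [NoTopOrder α] : (cof α).IsRegular := by
  classical
  refine ⟨?_, ?_⟩
  · rw [← cof_antisymmetrization, aleph0_le_cof_iff, cof_antisymmetrization]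
    exact one_lt_cof
  · rw [← cof_antisymmetrization, cof_ord_cof_of_linearOrder]

end Order

structure IsTower (T : Set (Set ℕ)) : Prop where
  infinite : ∀ t ∈ T, t.Infinite
  chain : ∀ s ∈ T, ∀ t ∈ T, (s \ t).Finite ∨ (t \ s).Finite
  exists_infinite_diff : ∀ s : Set ℕ, s.Infinite → ∃ t ∈ T, (s \ t).Infinite

theorem towerNumber_le_mk {T : Set (Set ℕ)} (hT : IsTower T) : towerNumber ≤ #T :=
  csInf_le' ⟨T, rfl, hT.infinite, hT.chain, hT.exists_infinite_diff⟩

/-- A maximal `⊆*`-chain, stripped of its finite members, is a tower: an infinite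
pseudo-intersection could be split, and half of it would extend the chain. -/
theorem exists_isTower : ∃ T, IsTower T := by
  let r : Set ℕ → Set ℕ → Prop := fun s t => (s \ t).Finite
  obtain ⟨M, hM, -⟩ := (IsChain.empty (r := r)).exists_maxChain
  have hchain : ∀ s ∈ M, ∀ t ∈ M, r s t ∨ r t s := fun s hs t ht => by
    rcases eq_or_ne s t with rfl | hst
    · simp [r]
    · exact hM.isChain hs ht hst
  refine ⟨{t ∈ M | t.Infinite}, ⟨fun t ht => ht.2, fun s hs t ht => hchain s hs.1 t ht.1, ?_⟩⟩
  intro s hs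
  by_contra! hpseudo
  obtain ⟨u, hus, hu, hsu⟩ := hs.exists_infinite_subset_infinite_diff
  have hinsert : IsChain r (insert u M) := hM.isChain.insert fun t ht _ => by
    by_cases htinf : t.Infinite
    · exact Or.inl ((hpseudo t ⟨ht, htinf⟩).subset (sdiff_subset_sdiff_left hus))
    · exact Or.inr ((not_infinite.1 htinf).sdiff)
  have huM : u ∈ M := (hM.2 hinsert (subset_insert u M)).symm ▸ mem_insert u M
  exact hsu (hpseudo u ⟨huM, hu⟩)

theorem exists_isTower_mk_eq_towerNumber : ∃ T, IsTower T ∧ #T = towerNumber := by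
  obtain ⟨T, hT⟩ := exists_isTower
  obtain ⟨T', hcard, hinf, hchain, hdiff⟩ : towerNumber ∈ _ :=
    csInf_mem ⟨#T, T, rfl, hT.infinite, hT.chain, hT.exists_infinite_diff⟩
  exact ⟨T', ⟨hinf, hchain, hdiff⟩, hcard⟩

/-- The members of `T`, preordered by reverse almost inclusion: `s ≤ t` iff `t \ s` is finite,
so that cofinal subsets are the `⊆*`-coinitial ones. -/
def AlmostSupset (T : Set (Set ℕ)) : Type := T

namespace AlmostSupset

variable {T : Set (Set ℕ)}

def val (x : AlmostSupset T) : Set ℕ := Subtype.val x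

theorem val_injective : Function.Injective (val (T := T)) := Subtype.val_injective

theorem val_mem (x : AlmostSupset T) : x.val ∈ T := Subtype.property x

instance : Preorder (AlmostSupset T) where
  le x y := (y.val \ x.val).Finite
  le_refl x := by simp
  le_trans _ _ _ hxy hyz := hyz.diff_trans hxy

end AlmostSupset

namespace IsTower

variable {T : Set (Set ℕ)}

theorem nonempty (hT : IsTower T) : Nonempty (AlmostSupset T) :=
  let ⟨t, ht, _⟩ := hT.exists_infinite_diff univ infinite_univ
  ⟨⟨t, ht⟩⟩

theorem total (hT : IsTower T) : @Std.Total (AlmostSupset T) (· ≤ ·) :=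
  ⟨fun x y => hT.chain y.val y.val_mem x.val x.val_mem⟩

theorem noTopOrder (hT : IsTower T) : NoTopOrder (AlmostSupset T) :=
  ⟨fun x =>
    let ⟨t, ht, hdiff⟩ := hT.exists_infinite_diff x.val (hT.infinite _ x.val_mem)
    ⟨⟨t, ht⟩, hdiff⟩⟩

theorem image_val_of_isCofinal (hT : IsTower T) {S : Set (AlmostSupset T)} (hS : IsCofinal S) :
    IsTower (AlmostSupset.val '' S) where
  infinite := by
    rintro _ ⟨x, -, rfl⟩
    exact hT.infinite _ x.val_mem
  chain := by
    rintro _ ⟨x, -, rfl⟩ _ ⟨y, -, rfl⟩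
    exact hT.chain _ x.val_mem _ y.val_mem
  exists_infinite_diff s hs := by
    obtain ⟨t, ht, hst⟩ := hT.exists_infinite_diff s hs
    obtain ⟨x, hxS, hx⟩ := hS ⟨t, ht⟩
    exact ⟨x.val, mem_image_of_mem _ hxS, fun hsx => hst (hsx.diff_trans hx)⟩

theorem towerNumber_le_cof (hT : IsTower T) : towerNumber ≤ Order.cof (AlmostSupset T) :=
  Order.le_cof_iff.2 fun _ hS =>
    (towerNumber_le_mk (hT.image_val_of_isCofinal hS)).trans_eq
      (mk_image_eq AlmostSupset.val_injective)

end IsTower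

theorem towerNumber_isRegular : towerNumber.IsRegular := by
  obtain ⟨T, hT, hTcard⟩ := exists_isTower_mk_eq_towerNumber
  have := hT.total
  have := hT.nonempty
  have := hT.noTopOrder
  have hcof : Order.cof (AlmostSupset T) = towerNumber :=
    ((Order.cof_le_cardinalMk (AlmostSupset T)).trans_eq hTcard).antisymm hT.towerNumber_le_cof
  exact hcof ▸ Order.isRegular_cof _
end

section
/- Let 𝕌 be a free ultrafilter on ω, let 𝔽 = {X ⊆ ω : |{A ∈ 𝒜 : A \ X infinite}| < 𝔠} where 𝒜 is an almost disjoint family of infinite subsets of ω of cardinality 𝔠 with 𝔽 ⊆ 𝕌. Then for every U ∈ 𝕌, the family {A ∈ 𝒜 : A ∩ U is infinite} has cardinality 𝔠. -/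
open Cardinal

theorem trace_on_ultrafilter_sets_has_continuum_many
    (𝒜 : Set (Set ℕ)) (hcard : #𝒜 = Cardinal.continuum)
    (hinf : ∀ A ∈ 𝒜, A.Infinite)
    (had : ∀ A ∈ 𝒜, ∀ B ∈ 𝒜, A ≠ B → (A ∩ B).Finite)
    (𝕌 : Ultrafilter ℕ) (hfree : ∀ A : Set ℕ, A.Finite → A ∉ 𝕌)
    (hF : ∀ X : Set ℕ, #{A ∈ 𝒜 | (A \ X).Infinite} < Cardinal.continuum → X ∈ 𝕌) :
    ∀ U ∈ 𝕌, #{A ∈ 𝒜 | (A ∩ U).Infinite} = Cardinal.continuum := by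
  intro U hU
  refine le_antisymm ?_ ?_
  · calc #{A ∈ 𝒜 | (A ∩ U).Infinite} ≤ #𝒜 :=
      Cardinal.mk_le_mk_of_subset (fun A hA => hA.1)
    _ = Cardinal.continuum := hcard
  · by_contra h
    rw [not_le] at h
    have hc : Uᶜ ∈ 𝕌 := hF Uᶜ (by simpa [Set.diff_compl] using h)
    simpa using 𝕌.toFilter.inter_sets hU hc
end
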